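/- arXiv:2106.16242 — 7 statements merged into one kernel-verified Lean document; each statement's English description precedes it below -/
import Mathlib

section
/- Let $P_n$ be the path graph on $n \geq 1$ vertices and let $0 < r < 1$. The minimum number of vertices whose removal from $P_n$ leaves every connected component with at most $\lfloor rn \rfloor$ vertices equals $\lfloor n / (\lfloor rn \rfloor + 1) \rfloor$. -/
open SimpleGraph

/-- A graph is in a *failure state* for threshold `k` if every connected
component has order at most `k`. -/
def failureState {V : Type*} (G : SimpleGraph V) (k : ℕ) : Prop :=
  ∀ v : V, (G.connectedComponentMk v).supp.ncard ≤ k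

/-- `S` is a vertex disconnecting set: removing the vertices of `S` from `G`
leaves every component with at most `k` vertices. -/
def vertexDisconnects {V : Type*} (G : SimpleGraph V) (k : ℕ) (S : Set V) : Prop :=
  failureState (G.induce Sᶜ) k

/-- Component order proportion vertex connectivity: minimum size of a vertex
disconnecting set. -/
noncomputable def COv {V : Type*} (G : SimpleGraph V) (k : ℕ) : ℕ :=
  sInf {c | ∃ S : Set V, S.ncard = c ∧ vertexDisconnects G k S}

/-- Component order proportion edge connectivity: minimum size of an edge
disconnecting set. -/
noncomputable def COe {V : Type*} (G : SimpleGraph V) (k : ℕ) : ℕ :=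
  sInf {c | ∃ E' : Set (Sym2 V), E' ⊆ G.edgeSet ∧ E'.ncard = c ∧
    failureState (G.deleteEdges E') k}

/-- Minimum of `COv` over all graphs with `n` vertices and `m` edges. -/
noncomputable def gminV (n k m : ℕ) : ℕ :=
  sInf {c | ∃ G : SimpleGraph (Fin n), G.edgeSet.ncard = m ∧ COv G k = c}

/-- Minimum of `COe` over all graphs with `n` vertices and `m` edges. -/
noncomputable def gminE (n k m : ℕ) : ℕ :=
  sInf {c | ∃ G : SimpleGraph (Fin n), G.edgeSet.ncard = m ∧ COe G k = c}


private lemma succ_div_mod {k u : ℕ} (h : u % (k+1) ≠ k) :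
    (u+1) / (k+1) = u / (k+1) ∧ (u+1) % (k+1) = u % (k+1) + 1 := by
  have hlt : u % (k+1) < k + 1 := Nat.mod_lt _ (Nat.succ_pos k)
  have hr : u % (k+1) + 1 < k + 1 := by omega
  have hu : u + 1 = (k+1) * (u / (k+1)) + (u % (k+1) + 1) := by
    have := Nat.div_add_mod u (k+1); omega
  constructor
  · rw [hu, Nat.mul_add_div (Nat.succ_pos k), Nat.div_eq_of_lt hr, Nat.add_zero]
  · rw [hu, Nat.mul_add_mod, Nat.mod_eq_of_lt hr]

private lemma ncard_range_fin {α : Type*} {m : ℕ} {f : Fin m → α} (hf : Function.Injective f) :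
    (Set.range f).ncard = m := by
  rw [← Set.image_univ, Set.ncard_image_of_injective _ hf, Set.ncard_univ,
    Nat.card_eq_fintype_card, Fintype.card_fin]

lemma pathCOv_aux (n k : ℕ) : COv (pathGraph n) k = n / (k+1) := by
  have hk1 : 0 < k + 1 := Nat.succ_pos k
  set s := n / (k+1) with hs
  -- the witness set
  have hwit : ∃ S : Set (Fin n), S.ncard = s ∧ vertexDisconnects (pathGraph n) k S := by
    classical
    have hbound : ∀ j : Fin s, (j : ℕ) * (k+1) + k < n := by
      intro j
      have : (j : ℕ) + 1 ≤ s := j.2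
      have := (Nat.le_div_iff_mul_le hk1).mp this
      calc (j : ℕ) * (k+1) + k < ((j:ℕ)+1) * (k+1) := by ring_nf; omega
        _ ≤ n := this
    refine ⟨{v : Fin n | (v : ℕ) % (k+1) = k}, ?_, ?_⟩
    · -- cardinality
      have hSr : {v : Fin n | (v : ℕ) % (k+1) = k} =
          Set.range (fun j : Fin s => (⟨(j:ℕ) * (k+1) + k, hbound j⟩ : Fin n)) := by
        ext v
        simp only [Set.mem_setOf_eq, Set.mem_range]
        constructor
        · intro hv
          have hdm := Nat.div_add_mod (v : ℕ) (k+1)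
          have hjlt : (v : ℕ) / (k+1) + 1 ≤ s := by
            rw [hs, Nat.le_div_iff_mul_le hk1]
            have : ((v:ℕ)/(k+1) + 1) * (k+1) = (k+1) * ((v:ℕ)/(k+1)) + (k+1) := by ring
            rw [this]
            have hvlt : (v : ℕ) < n := v.2
            omega
          refine ⟨⟨(v:ℕ)/(k+1), by omega⟩, ?_⟩
          apply Fin.ext
          simp only []
          rw [Nat.mul_comm]
          omega
        · rintro ⟨j, rfl⟩
          simp only []
          rw [Nat.mul_comm, Nat.mul_add_mod, Nat.mod_eq_of_lt (Nat.lt_succ_self k)]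
      rw [hSr, ncard_range_fin]
      intro j1 j2 h
      have := congrArg Fin.val h
      simp only [] at this
      apply Fin.ext
      have := Nat.eq_of_mul_eq_mul_right hk1 (by omega : (j1:ℕ) * (k+1) = (j2:ℕ) * (k+1))
      exact this
    · -- disconnecting
      set S := {v : Fin n | (v : ℕ) % (k+1) = k} with hSdef
      intro v
      set G' := (pathGraph n).induce Sᶜ with hG'
      have hmod : ∀ w : ↥(Sᶜ), ((w : Fin n) : ℕ) % (k+1) ≠ k := fun w => w.2
      -- reachability preserves div
      have hreach : ∀ a b : ↥(Sᶜ), G'.Reachable a b →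
          ((a : Fin n) : ℕ) / (k+1) = ((b : Fin n) : ℕ) / (k+1) := by
        intro a b hab
        obtain ⟨p⟩ := hab
        induction p with
        | nil => rfl
        | cons ha _ ih =>
          rename_i x y _ _
          refine Eq.trans ?_ ih
          have hadj : (pathGraph n).Adj (x : Fin n) (y : Fin n) := by
            simpa [hG', SimpleGraph.induce] using ha
          rw [pathGraph_adj] at hadj
          rcases hadj with h1 | h1
          · rw [← h1]; exact ((succ_div_mod (hmod x)).1).symm
          · rw [← h1]; exact (succ_div_mod (hmod y)).1
      set q := ((v : Fin n) : ℕ) / (k+1) with hq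
      have hsub : ((G'.connectedComponentMk v).supp) ⊆
          {w : ↥(Sᶜ) | ((w : Fin n) : ℕ) / (k+1) = q} := by
        intro w hw
        rw [SimpleGraph.ConnectedComponent.mem_supp_iff] at hw
        exact hreach w v (SimpleGraph.ConnectedComponent.exact hw)
      calc (G'.connectedComponentMk v).supp.ncard
          ≤ {w : ↥(Sᶜ) | ((w : Fin n) : ℕ) / (k+1) = q}.ncard :=
            Set.ncard_le_ncard hsub (Set.toFinite _)
        _ ≤ k := by
            set T := {w : ↥(Sᶜ) | ((w : Fin n) : ℕ) / (k+1) = q} with hT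
            have hinj : Set.InjOn (fun w : ↥(Sᶜ) => ((w : Fin n) : ℕ) % (k+1)) T := by
              intro w1 hw1 w2 hw2 h
              replace h : ((w1 : Fin n) : ℕ) % (k+1) = ((w2 : Fin n) : ℕ) % (k+1) := h
              have d1 : ((w1 : Fin n) : ℕ) / (k+1) = q := hw1
              have d2 : ((w2 : Fin n) : ℕ) / (k+1) = q := hw2
              have e1 := Nat.div_add_mod ((w1 : Fin n) : ℕ) (k+1)
              have e2 := Nat.div_add_mod ((w2 : Fin n) : ℕ) (k+1)
              have : ((w1 : Fin n) : ℕ) = ((w2 : Fin n) : ℕ) := by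
                rw [d1] at e1; rw [d2] at e2; omega
              exact Subtype.ext (Fin.ext this)
            have himg : (fun w : ↥(Sᶜ) => ((w : Fin n) : ℕ) % (k+1)) '' T ⊆ Set.Iio k := by
              rintro _ ⟨w, _, rfl⟩
              have h1 := hmod w
              have h2 : ((w : Fin n) : ℕ) % (k+1) < k + 1 := Nat.mod_lt _ hk1
              exact lt_of_le_of_ne (by omega) h1
            calc T.ncard = ((fun w : ↥(Sᶜ) => ((w : Fin n) : ℕ) % (k+1)) '' T).ncard :=
                  (Set.ncard_image_of_injOn hinj).symm
              _ ≤ (Set.Iio k).ncard := Set.ncard_le_ncard himg (Set.finite_Iio k)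
              _ = k := by rw [← Finset.coe_Iio, Set.ncard_coe_finset, Nat.card_Iio]
  apply le_antisymm
  · obtain ⟨W, hW⟩ := hwit
    exact Nat.sInf_le ⟨W, hW⟩
  · obtain ⟨W, hW⟩ := hwit
    refine le_csInf ⟨s, W, hW⟩ ?_
    rintro c ⟨S, hcard, hdisc⟩
    classical
    have claim : ∀ j : Fin s, ∃ v : Fin n, v ∈ S ∧ (v : ℕ) / (k+1) = (j : ℕ) := by
      intro j
      by_contra hcon
      push_neg at hcon
      have hblk : ∀ i : ℕ, i < k + 1 → (j : ℕ) * (k+1) + i < n := by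
        intro i hi
        have : (j : ℕ) + 1 ≤ s := j.2
        have := (Nat.le_div_iff_mul_le hk1).mp this
        calc (j : ℕ) * (k+1) + i < ((j:ℕ)+1) * (k+1) := by ring_nf; omega
          _ ≤ n := this
      have hdiv : ∀ i : ℕ, i < k + 1 → ((j : ℕ) * (k+1) + i) / (k+1) = (j : ℕ) := by
        intro i hi
        rw [Nat.mul_comm, Nat.mul_add_div hk1, Nat.div_eq_of_lt hi, Nat.add_zero]
      have hmem : ∀ i : ℕ, (hi : i < k + 1) → (⟨(j:ℕ)*(k+1)+i, hblk i hi⟩ : Fin n) ∈ Sᶜ := by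
        intro i hi hS
        exact hcon _ hS (hdiv i hi)
      set g : Fin (k+1) → ↥(Sᶜ) :=
        fun i => ⟨⟨(j:ℕ)*(k+1)+(i:ℕ), hblk i i.2⟩, hmem i i.2⟩ with hg
      set G' := (pathGraph n).induce Sᶜ with hG'
      have hchain : ∀ i : Fin (k+1), G'.Reachable (g ⟨0, hk1⟩) (g i) := by
        intro i
        obtain ⟨i, hi⟩ := i
        induction i with
        | zero => exact SimpleGraph.Reachable.refl _
        | succ m ih =>
          refine (ih (by omega)).trans ?_
          apply SimpleGraph.Adj.reachable
          show G'.Adj (g ⟨m, by omega⟩) (g ⟨m+1, hi⟩)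
          have : (pathGraph n).Adj ⟨(j:ℕ)*(k+1)+m, hblk m (by omega)⟩
              ⟨(j:ℕ)*(k+1)+(m+1), hblk (m+1) hi⟩ := by
            rw [pathGraph_adj]; left; simp; omega
          simpa [hG', hg, SimpleGraph.induce] using this
      have hginj : Function.Injective g := by
        intro i1 i2 h
        have := congrArg (fun w : ↥(Sᶜ) => ((w : Fin n) : ℕ)) h
        simp only [hg] at this
        exact Fin.ext (by omega)
      have hsub : Set.range g ⊆ (G'.connectedComponentMk (g ⟨0, hk1⟩)).supp := by
        rintro _ ⟨i, rfl⟩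
        rw [SimpleGraph.ConnectedComponent.mem_supp_iff]
        exact SimpleGraph.ConnectedComponent.sound (hchain i).symm
      have h1 : k + 1 ≤ (G'.connectedComponentMk (g ⟨0, hk1⟩)).supp.ncard := by
        calc k + 1 = (Set.range g).ncard := (ncard_range_fin hginj).symm
          _ ≤ _ := Set.ncard_le_ncard hsub (Set.toFinite _)
      have h2 : (G'.connectedComponentMk (g ⟨0, hk1⟩)).supp.ncard ≤ k := hdisc (g ⟨0, hk1⟩)
      omega
    choose F hF1 hF2 using claim
    have hFinj : Function.Injective F := by
      intro j1 j2 h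
      apply Fin.ext
      rw [← hF2 j1, ← hF2 j2, h]
    calc s = (Set.range F).ncard := (ncard_range_fin hFinj).symm
      _ ≤ S.ncard := Set.ncard_le_ncard (by rintro _ ⟨j, rfl⟩; exact hF1 j) (Set.toFinite _)
      _ = c := hcard

theorem pathCOv (n : ℕ) (hn : 1 ≤ n) (r : ℝ) (hr0 : 0 < r) (hr1 : r < 1) :
    COv (pathGraph n) ⌊r * n⌋₊ = n / (⌊r * n⌋₊ + 1) := by
  exact pathCOv_aux n _
end

section
/- Let $P_n$ be the path graph on $n \geq 2$ vertices and let $0 < r < 1$ with $\lfloor rn \rfloor \geq 1$. The minimum number of edges whose removal from $P_n$ leaves every connected component with at most $\lfloor rn \rfloor$ vertices equals $\lfloor (n-1)/\lfloor rn \rfloor \rfloor$. -/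
open SimpleGraph

private lemma sym2_fst_eq {n : ℕ} {u v u' v' : Fin n} (h : s(u, v) = s(u', v'))
    (h1 : u.val + 1 = v.val) (h2 : u'.val + 1 = v'.val) : u.val = u'.val := by
  rw [Sym2.eq_iff] at h
  rcases h with ⟨ha, hb⟩ | ⟨ha, hb⟩ <;>
  · have h3 := congrArg Fin.val ha
    have h4 := congrArg Fin.val hb
    omega

theorem pathCOe_general (n K : ℕ) (hK : 1 ≤ K) :
    (sInf {c | ∃ E' : Set (Sym2 (Fin n)), E' ⊆ (pathGraph n).edgeSet ∧ E'.ncard = c ∧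
      failureState ((pathGraph n).deleteEdges E') K}) = (n - 1) / K := by
  classical
  have hdm : ((n - 1) / K) * K ≤ n - 1 := Nat.div_mul_le_self _ _
  set q := (n - 1) / K with hqdef
  have hbound : ∀ j : Fin q, j.val * K + K < n := by
    intro j
    have h1 : (j.val + 1) * K ≤ q * K := Nat.mul_le_mul_right _ j.2
    rw [Nat.succ_mul] at h1
    have h3 : 0 < q := j.pos
    have h4 : 0 < q * K := Nat.mul_pos h3 hK
    omega
  set f : Fin q → Sym2 (Fin n) := fun j =>
    s((⟨j.val * K + (K - 1), by have := hbound j; omega⟩ : Fin n),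
      (⟨j.val * K + K, hbound j⟩ : Fin n)) with hfdef
  have hEsub : Set.range f ⊆ (pathGraph n).edgeSet := by
    rintro e ⟨j, rfl⟩
    rw [mem_edgeSet, pathGraph_adj]
    left
    show j.val * K + (K - 1) + 1 = j.val * K + K
    omega
  have hfinj : Function.Injective f := by
    intro j j' h
    have h0 : j.val * K + (K - 1) = j'.val * K + (K - 1) :=
      sym2_fst_eq h (by show j.val * K + (K-1) + 1 = j.val * K + K; omega)
        (by show j'.val * K + (K-1) + 1 = j'.val * K + K; omega)
    have h1 : j.val * K = j'.val * K := by omega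
    exact Fin.ext (Nat.eq_of_mul_eq_mul_right hK h1)
  have hEcard : (Set.range f).ncard = q := by
    rw [← Set.image_univ, Set.ncard_image_of_injective _ hfinj, Set.ncard_univ,
      Nat.card_eq_fintype_card, Fintype.card_fin]
  -- step lemma
  have hstep1 : ∀ u v : Fin n, u.val + 1 = v.val → s(u, v) ∉ Set.range f →
      u.val / K = v.val / K := by
    intro u v h1 h2
    have hdvd : ¬ K ∣ (u.val + 1) := by
      rintro ⟨m, hm⟩
      rcases m with _ | m'
      · omega
      · have hmK : u.val + 1 = m' * K + K := by rw [hm]; ring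
        have hvn : v.val < n := v.2
        have hmq : m' + 1 ≤ q := by
          rw [hqdef, Nat.le_div_iff_mul_le hK, Nat.succ_mul]
          omega
        refine h2 ⟨⟨m', by omega⟩, ?_⟩
        show s((⟨m' * K + (K - 1), _⟩ : Fin n), (⟨m' * K + K, _⟩ : Fin n)) = s(u, v)
        rw [Sym2.eq_iff]
        left
        constructor
        · apply Fin.ext
          show m' * K + (K - 1) = u.val
          omega
        · apply Fin.ext
          show m' * K + K = v.val
          omega
    rw [← h1, Nat.succ_div_of_not_dvd hdvd]
  have hstep : ∀ u v : Fin n, ((pathGraph n).deleteEdges (Set.range f)).Adj u v →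
      u.val / K = v.val / K := by
    intro u v huv
    rw [deleteEdges_adj, pathGraph_adj] at huv
    obtain ⟨h1 | h1, h2⟩ := huv
    · exact hstep1 u v h1 h2
    · exact (hstep1 v u h1 (by rwa [Sym2.eq_swap])).symm
  have hfail : failureState ((pathGraph n).deleteEdges (Set.range f)) K := by
    intro v
    have hsub : (((pathGraph n).deleteEdges (Set.range f)).connectedComponentMk v).supp ⊆
        {u : Fin n | u.val / K = v.val / K} := by
      intro u hu
      rw [ConnectedComponent.mem_supp_iff, ConnectedComponent.eq] at hu
      obtain ⟨w⟩ := hu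
      induction w with
      | nil => rfl
      | cons h p ih => exact (hstep _ _ h).trans ih
    have hT : {u : Fin n | u.val / K = v.val / K}.ncard ≤ K := by
      have hinj : Function.Injective
          (fun u : {u : Fin n // u.val / K = v.val / K} =>
            (⟨u.1.val % K, Nat.mod_lt _ hK⟩ : Fin K)) := by
        rintro ⟨x, hx⟩ ⟨y, hy⟩ h
        simp only [Fin.mk.injEq] at h
        have e1 : K * (x.val / K) + x.val % K = x.val := Nat.div_add_mod _ _
        have e2 : K * (y.val / K) + y.val % K = y.val := Nat.div_add_mod _ _
        rw [hx] at e1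
        rw [hy] at e2
        have : x.val = y.val := by omega
        exact Subtype.ext (Fin.ext this)
      calc {u : Fin n | u.val / K = v.val / K}.ncard
          = Nat.card {u : Fin n | u.val / K = v.val / K} :=
            (Nat.card_coe_set_eq _).symm
        _ ≤ Nat.card (Fin K) := Nat.card_le_card_of_injective _ hinj
        _ = K := by simp
    exact le_trans (Set.ncard_le_ncard hsub (Set.toFinite _)) hT
  have hmem : q ∈ {c | ∃ E' : Set (Sym2 (Fin n)), E' ⊆ (pathGraph n).edgeSet ∧ E'.ncard = c ∧
      failureState ((pathGraph n).deleteEdges E') K} :=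
    ⟨Set.range f, hEsub, hEcard, hfail⟩
  -- lower bound
  have hlb : ∀ c ∈ {c | ∃ E' : Set (Sym2 (Fin n)), E' ⊆ (pathGraph n).edgeSet ∧ E'.ncard = c ∧
      failureState ((pathGraph n).deleteEdges E') K}, q ≤ c := by
    rintro c ⟨E', hsub, rfl, hfl⟩
    have hex : ∀ j : Fin q, ∃ i : ℕ, j.val * K ≤ i ∧ i < j.val * K + K ∧
        ∃ u v : Fin n, u.val = i ∧ v.val = i + 1 ∧ s(u, v) ∈ E' := by
      intro j
      by_contra hcon
      push_neg at hcon
      have key : ∀ m : ℕ, (hm : m ≤ K) →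
          ((pathGraph n).deleteEdges E').Reachable
            ⟨j.val * K, by have := hbound j; omega⟩
            ⟨j.val * K + m, by have := hbound j; omega⟩ := by
        intro m hm
        induction m with
        | zero => exact Reachable.refl _
        | succ m ih =>
          refine (ih (by omega)).trans (Adj.reachable ?_)
          rw [deleteEdges_adj]
          constructor
          · rw [pathGraph_adj]
            left
            show j.val * K + m + 1 = j.val * K + (m + 1)
            omega
          · intro hmemE
            exact hcon (j.val * K + m) (by omega) (by omega) _ _ rfl rfl hmemE
      have hcc := hfl ⟨j.val * K, by have := hbound j; omega⟩
      set C := ((pathGraph n).deleteEdges E').connectedComponentMk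
        (⟨j.val * K, by have := hbound j; omega⟩ : Fin n) with hC
      have himg : (fun m : Fin (K+1) =>
          (⟨j.val * K + m.val, by have := hbound j; have := m.2; omega⟩ : Fin n)) ''
            Set.univ ⊆ C.supp := by
        rintro x ⟨m, -, rfl⟩
        rw [ConnectedComponent.mem_supp_iff, hC, ConnectedComponent.eq]
        exact (key m.val (by have := m.2; omega)).symm
      have hinj2 : Function.Injective (fun m : Fin (K+1) =>
          (⟨j.val * K + m.val, by have := hbound j; have := m.2; omega⟩ : Fin n)) := by
        intro a b h
        simp only [Fin.mk.injEq] at h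
        exact Fin.ext (by omega)
      have h1 : ((fun m : Fin (K+1) =>
          (⟨j.val * K + m.val, by have := hbound j; have := m.2; omega⟩ : Fin n)) ''
            Set.univ).ncard = K + 1 := by
        rw [Set.ncard_image_of_injective _ hinj2, Set.ncard_univ,
          Nat.card_eq_fintype_card, Fintype.card_fin]
      have h2 := Set.ncard_le_ncard himg (Set.toFinite _)
      omega
    choose i hlo hhi u v hu hv hmemE using hex
    have : Finite (Sym2 (Fin n)) := inferInstance
    have hginj : Function.Injective (fun j : Fin q => (⟨s(u j, v j), hmemE j⟩ : E')) := by
      intro j j' h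
      simp only [Subtype.mk.injEq] at h
      have h0 := sym2_fst_eq h (by rw [hu, hv]) (by rw [hu, hv])
      rw [hu j, hu j'] at h0
      have hj : i j / K = j.val :=
        Nat.div_eq_of_lt_le (hlo j) (by rw [Nat.succ_mul]; exact hhi j)
      have hj' : i j' / K = j'.val :=
        Nat.div_eq_of_lt_le (hlo j') (by rw [Nat.succ_mul]; exact hhi j')
      exact Fin.ext (by rw [← hj, ← hj', h0])
    calc q = Nat.card (Fin q) := by simp
      _ ≤ Nat.card E' := Nat.card_le_card_of_injective _ hginj
      _ = E'.ncard := Nat.card_coe_set_eq _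
  exact le_antisymm (Nat.sInf_le hmem) (le_csInf ⟨q, hmem⟩ hlb)


theorem pathCOe (n : ℕ) (hn : 2 ≤ n) (r : ℝ) (hr0 : 0 < r) (hr1 : r < 1)
    (hk : 1 ≤ ⌊r * n⌋₊) :
    COe (pathGraph n) ⌊r * n⌋₊ = (n - 1) / ⌊r * n⌋₊ := by
  exact pathCOe_general n _ hk
end

section
/- Let $C_n$ be the cycle graph on $n \geq 3$ vertices and let $0 < r < 1$ with $\lfloor rn \rfloor \geq 1$. The minimum number of edges whose removal from $C_n$ leaves every connected component with at most $\lfloor rn \rfloor$ vertices equals $\lfloor (n-1)/\lfloor rn \rfloor \rfloor + 1$. -/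
open SimpleGraph

/-!
A graph on `n` vertices all of whose components have order at most `k` has at least `n / k`
components, so at least `⌈n / k⌉ = (n - 1) / k + 1` of them. If deleting `F` from the cycle
leaves no component spanning the whole cycle, then every component has a last vertex `v` whose
successor edge `s(v, v + 1)` lies in `F`, and this vertex determines the component; hence `F` has
at least as many edges as there are components. Conversely, cutting the cycle after every `k`-th
vertex and after the last vertex uses `(n - 1) / k + 1` edges and leaves paths of order `≤ k`.
-/

open Finset

theorem failureState_bot {V : Type*} {k : ℕ} (hk : 0 < k) :
    failureState (⊥ : SimpleGraph V) k := by
  intro v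
  have hsupp : ((⊥ : SimpleGraph V).connectedComponentMk v).supp = {v} := by
    ext w
    simp [ConnectedComponent.eq, reachable_bot]
  rw [hsupp, Set.ncard_singleton]
  exact hk

theorem COe_le_ncard {V : Type*} {G : SimpleGraph V} {k : ℕ} {E' : Set (Sym2 V)}
    (hE' : E' ⊆ G.edgeSet) (h : failureState (G.deleteEdges E') k) : COe G k ≤ E'.ncard :=
  Nat.sInf_le ⟨E', hE', rfl, h⟩

theorem exists_ncard_eq_COe {V : Type*} (G : SimpleGraph V) {k : ℕ} (hk : 0 < k) :
    ∃ E' ⊆ G.edgeSet, E'.ncard = COe G k ∧ failureState (G.deleteEdges E') k := by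
  have hne : {c | ∃ E' : Set (Sym2 V), E' ⊆ G.edgeSet ∧ E'.ncard = c ∧
      failureState (G.deleteEdges E') k}.Nonempty :=
    ⟨_, G.edgeSet, subset_rfl, rfl, by
      simpa [deleteEdges_eq_bot.mpr subset_rfl] using failureState_bot hk⟩
  obtain ⟨E', hsub, hcard, hfail⟩ := Nat.sInf_mem hne
  exact ⟨E', hsub, hcard, hfail⟩

theorem card_le_mul_natCard_connectedComponent {V : Type*} [Fintype V] {G : SimpleGraph V}
    {k : ℕ} (h : failureState G k) : Fintype.card V ≤ k * Nat.card G.ConnectedComponent := by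
  classical
  have := Fintype.ofFinite G.ConnectedComponent
  calc Fintype.card V = #(univ : Finset V) := rfl
    _ ≤ k * #(univ.image G.connectedComponentMk) := by
      refine card_le_mul_card_image _ k fun C _ => ?_
      obtain ⟨v, rfl⟩ : ∃ v, G.connectedComponentMk v = C := C.exists_rep
      have hsupp : (({a | G.connectedComponentMk a = G.connectedComponentMk v} : Finset V) :
          Set V) = (G.connectedComponentMk v).supp := by
        ext
        simp [ConnectedComponent.mem_supp_iff]
      rw [← Set.ncard_coe_finset, hsupp]
      exact h v
    _ ≤ k * Nat.card G.ConnectedComponent := by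
      rw [Nat.card_eq_fintype_card]
      exact Nat.mul_le_mul_left k (card_le_univ _)

theorem failureState_of_adj_imp_eq {V β : Type*} [Finite V] {G : SimpleGraph V} {k : ℕ}
    (f : V → β) (hf : ∀ a b, G.Adj a b → f a = f b)
    (hfib : ∀ b, {v | f v = b}.ncard ≤ k) : failureState G k := by
  have hreach : ∀ a b, G.Reachable a b → f a = f b := by
    rintro a b ⟨p⟩
    induction p with
    | nil => rfl
    | cons hadj _ ih => exact (hf _ _ hadj).trans ih
  intro v
  refine (Set.ncard_le_ncard (fun w hw => ?_) (Set.toFinite _)).trans (hfib (f v))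
  exact hreach w v (ConnectedComponent.exact hw)

theorem ncard_fin_val_div_eq_le {n k : ℕ} (hk : 0 < k) (q : ℕ) :
    {v : Fin n | v.val / k = q}.ncard ≤ k := by
  refine (Set.ncard_le_ncard_of_injOn (fun v => v.val % k) (t := (range k : Set ℕ))
    (fun v _ => by simpa using Nat.mod_lt _ hk) ?_ (finite_toSet _)).trans
    ((Set.ncard_coe_finset _).trans (card_range k)).le
  intro a ha b hb hab
  simp only [Set.mem_ofPred_eq] at ha hb hab
  ext
  rw [← Nat.div_add_mod a.val k, ← Nat.div_add_mod b.val k, ha, hb, hab]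

section cycleGraph

variable {n k : ℕ}

theorem cycleGraph_adj_add_one (v : Fin (n + 2)) : (cycleGraph (n + 2)).Adj v (v + 1) :=
  cycleGraph_adj.mpr (Or.inr (add_sub_cancel_left v 1))

theorem injective_sym2_mk_add_one : Function.Injective fun v : Fin (n + 3) => s(v, v + 1) := by
  intro a b h
  rcases Sym2.eq_iff.mp h with ⟨hab, -⟩ | ⟨hab, hba⟩
  · exact hab
  · have h2 : (1 + 1 : Fin (n + 3)) = 0 := by
      rw [hab, add_assoc] at hba
      simpa using hba
    simp [Fin.ext_iff, Fin.val_add, Nat.mod_eq_of_lt (show 2 < n + 3 by omega)] at h2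

open Fin.NatCast in
theorem Fin.exists_mem_add_one_notMem {S : Set (Fin (n + 1))} (hne : S.Nonempty)
    (huniv : S ≠ Set.univ) : ∃ v ∈ S, v + 1 ∉ S := by
  by_contra! hclosed
  obtain ⟨u, hu⟩ := hne
  have hadd : ∀ j : ℕ, u + j ∈ S := by
    intro j
    induction j with
    | zero => simpa using hu
    | succ j ih => simpa [add_assoc] using hclosed _ ih
  exact huniv (Set.eq_univ_of_forall fun w => by simpa using hadd (w - u).val)

theorem natCard_connectedComponent_cycleGraph_deleteEdges_le (F : Set (Sym2 (Fin (n + 3))))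
    (hproper : ∀ C : ((cycleGraph (n + 3)).deleteEdges F).ConnectedComponent,
      C.supp ≠ Set.univ) :
    Nat.card ((cycleGraph (n + 3)).deleteEdges F).ConnectedComponent ≤ F.ncard := by
  set H := (cycleGraph (n + 3)).deleteEdges F
  have hlast : ∀ C : H.ConnectedComponent, ∃ v ∈ C.supp, s(v, v + 1) ∈ F := by
    intro C
    obtain ⟨v, hv, hv1⟩ := Fin.exists_mem_add_one_notMem C.nonempty_supp (hproper C)
    refine ⟨v, hv, by_contra fun hF => hv1 ?_⟩
    have hadj : H.Adj v (v + 1) := (deleteEdges_adj ..).mpr ⟨cycleGraph_adj_add_one v, hF⟩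
    rw [ConnectedComponent.mem_supp_iff] at hv ⊢
    rw [← hv]
    exact (ConnectedComponent.connectedComponentMk_eq_of_adj hadj).symm
  choose f hfC hfF using hlast
  have hinj : Function.Injective fun C => (⟨s(f C, f C + 1), hfF C⟩ : F) := by
    intro C D h
    have hCD := injective_sym2_mk_add_one (congrArg Subtype.val h)
    rw [← hfC C, ← hfC D, hCD]
  exact (Nat.card_le_card_of_injective _ hinj).trans (Nat.card_coe_set_eq F).le

theorem le_ncard_of_failureState_cycleGraph_deleteEdges (hk : 0 < k) (hkn : k < n + 3)
    {F : Set (Sym2 (Fin (n + 3)))} (hF : failureState ((cycleGraph (n + 3)).deleteEdges F) k) :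
    (n + 2) / k + 1 ≤ F.ncard := by
  have hproper : ∀ C : ((cycleGraph (n + 3)).deleteEdges F).ConnectedComponent,
      C.supp ≠ Set.univ := by
    intro C hC
    obtain ⟨v, rfl⟩ : ∃ v, ((cycleGraph (n + 3)).deleteEdges F).connectedComponentMk v = C :=
      C.exists_rep
    have hsize := hF v
    rw [hC, Set.ncard_univ, Nat.card_eq_fintype_card, Fintype.card_fin] at hsize
    omega
  have hcover : n + 3 ≤ k * F.ncard := by
    simpa using (card_le_mul_natCard_connectedComponent hF).trans
      (Nat.mul_le_mul_left k (natCard_connectedComponent_cycleGraph_deleteEdges_le F hproper))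
  exact (Nat.div_lt_iff_lt_mul hk).mpr (by linarith [mul_comm k F.ncard])

def cycleBlockCut (n k : ℕ) : Set (Sym2 (Fin (n + 2))) :=
  (fun v => s(v, v + 1)) '' {v | k ∣ v.val + 1 ∨ v.val = n + 1}

theorem cycleBlockCut_subset_edgeSet : cycleBlockCut n k ⊆ (cycleGraph (n + 2)).edgeSet := by
  rintro _ ⟨v, -, rfl⟩
  exact cycleGraph_adj_add_one v

theorem ncard_cycleBlockCut_le : (cycleBlockCut n k).ncard ≤ (n + 1) / k + 1 := by
  classical
  calc (cycleBlockCut n k).ncard ≤ {v : Fin (n + 2) | k ∣ v.val + 1 ∨ v.val = n + 1}.ncard :=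
        Set.ncard_image_le (Set.toFinite _)
    _ = (Fin.val '' {v : Fin (n + 2) | k ∣ v.val + 1 ∨ v.val = n + 1}).ncard :=
        (Set.ncard_image_of_injective _ Fin.val_injective).symm
    _ ≤ #(insert (n + 1) {e ∈ range (n + 1) | k ∣ e + 1}) := by
        rw [← Set.ncard_coe_finset]
        refine Set.ncard_le_ncard ?_ (finite_toSet _)
        rintro _ ⟨v, hv, rfl⟩
        have := v.isLt
        simp only [Set.mem_ofPred_eq] at hv
        simp only [coe_insert, coe_filter, mem_range, Set.mem_insert_iff, Set.mem_ofPred_eq]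
        omega
    _ ≤ (n + 1) / k + 1 := (card_insert_le _ _).trans_eq (by rw [Nat.card_multiples])

theorem failureState_cycleGraph_deleteEdges_cycleBlockCut (hk : 0 < k) :
    failureState ((cycleGraph (n + 2)).deleteEdges (cycleBlockCut n k)) k := by
  have hsucc : ∀ v : Fin (n + 2), s(v, v + 1) ∉ cycleBlockCut n k →
      v.val / k = (v + 1).val / k := by
    intro v hv
    have hv' : ¬k ∣ v.val + 1 ∧ v.val ≠ n + 1 := not_or.mp fun h => hv ⟨v, h, rfl⟩
    rw [Fin.val_add_one, if_neg (fun h => hv'.2 (by simp [h])), Nat.succ_div_of_not_dvd hv'.1]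
  refine failureState_of_adj_imp_eq (fun v : Fin (n + 2) => v.val / k) ?_
    (ncard_fin_val_div_eq_le hk)
  intro a b hab
  obtain ⟨hadj, hcut⟩ := (deleteEdges_adj ..).mp hab
  rcases cycleGraph_adj.mp hadj with h | h
  · obtain rfl := sub_eq_iff_eq_add'.mp h
    exact (hsucc b (by rwa [Sym2.eq_swap])).symm
  · obtain rfl := sub_eq_iff_eq_add'.mp h
    exact hsucc a hcut

theorem COe_cycleGraph_le (hk : 0 < k) : COe (cycleGraph (n + 2)) k ≤ (n + 1) / k + 1 :=
  (COe_le_ncard cycleBlockCut_subset_edgeSet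
    (failureState_cycleGraph_deleteEdges_cycleBlockCut hk)).trans ncard_cycleBlockCut_le

theorem COe_cycleGraph (hk : 0 < k) (hkn : k < n + 3) :
    COe (cycleGraph (n + 3)) k = (n + 2) / k + 1 := by
  obtain ⟨F, -, hF, hfail⟩ := exists_ncard_eq_COe (cycleGraph (n + 3)) hk
  exact le_antisymm (COe_cycleGraph_le hk)
    (hF ▸ le_ncard_of_failureState_cycleGraph_deleteEdges hk hkn hfail)

end cycleGraph

theorem cycleCOe_general (n : ℕ) (hn : 3 ≤ n) (r : ℝ) (hr1 : r < 1)
    (hk : 1 ≤ ⌊r * n⌋₊) :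
    COe (cycleGraph n) ⌊r * n⌋₊ = (n - 1) / ⌊r * n⌋₊ + 1 := by
  have hkn : ⌊r * n⌋₊ < n :=
    (Nat.floor_lt' (by omega)).mpr (mul_lt_of_lt_one_left (by positivity) hr1)
  obtain ⟨N, rfl⟩ : ∃ N, n = N + 3 := ⟨n - 3, by omega⟩
  exact COe_cycleGraph hk hkn

theorem cycleCOe (n : ℕ) (hn : 3 ≤ n) (r : ℝ) (hr0 : 0 < r) (hr1 : r < 1)
    (hk : 1 ≤ ⌊r * n⌋₊) :
    COe (cycleGraph n) ⌊r * n⌋₊ = (n - 1) / ⌊r * n⌋₊ + 1 :=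
  cycleCOe_general n hn r hr1 hk
end

section
/- Let $K_n$ be the complete graph on $n$ vertices, $0 < r < 1$ with $k = \lfloor rn \rfloor \geq 1$, and write $n = pk + q$ with $0 \leq q < k$. The minimum number of edges whose removal from $K_n$ leaves every connected component with at most $k$ vertices equals $\binom{n}{2} - p\binom{k}{2} - \binom{q}{2}$. -/
open SimpleGraph

/-!
Deleting edges from `K_n` leaves a subgraph `H` whose components have at most `k` vertices, and
`H` is contained in the disjoint union of the cliques on its components. A disjoint union of
cliques of orders `s_i ≤ k` with `∑ s_i = n` has `∑ (s_i choose 2)` edges, and the exchange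
inequality `(a choose 2) + (c choose 2) ≤ (k choose 2) + (a + c - k choose 2)` for
`a, c ≤ k ≤ a + c` shows that this is at most `p (k choose 2) + (q choose 2)`, which is attained by
`p K_k + K_q`.
-/

/-- The number of edges of `p K_k + K_q`, where `m = p * k + q` with `q < k`. -/
def maxFailureEdges (k m : ℕ) : ℕ :=
  m / k * k.choose 2 + (m % k).choose 2

lemma two_mul_choose_two (s : ℕ) : 2 * s.choose 2 = s * (s - 1) := by
  rw [Nat.choose_two_right, mul_comm, Nat.div_two_mul_two_of_even (Nat.even_mul_pred_self s)]

lemma choose_two_add_choose_two_le {a c k : ℕ} (ha : a ≤ k) (hc : c ≤ k) (hk : k ≤ a + c) :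
    a.choose 2 + c.choose 2 ≤ k.choose 2 + (a + c - k).choose 2 := by
  have hq : ((a.choose 2 + c.choose 2 : ℕ) : ℚ) ≤ (k.choose 2 + (a + c - k).choose 2 : ℕ) := by
    push_cast [Nat.cast_choose_two, Nat.cast_sub hk]
    nlinarith [mul_nonneg (sub_nonneg.2 (Nat.cast_le (α := ℚ).2 ha))
      (sub_nonneg.2 (Nat.cast_le (α := ℚ).2 hc))]
  exact_mod_cast hq

lemma choose_two_add_maxFailureEdges_le {a k : ℕ} (b : ℕ) (ha : a ≤ k) :
    a.choose 2 + maxFailureEdges k b ≤ maxFailureEdges k (a + b) := by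
  rcases k.eq_zero_or_pos with rfl | hk
  · simp [Nat.le_zero.1 ha, maxFailureEdges]
  have hb : b % k + k * (b / k) = b := Nat.mod_add_div b k
  have hbk : b % k < k := Nat.mod_lt b hk
  unfold maxFailureEdges
  by_cases hfit : a + b % k < k
  · obtain ⟨hdiv, hmod⟩ := (Nat.div_mod_unique hk).2
      ⟨(by omega : a + b % k + k * (b / k) = a + b), hfit⟩
    rw [hdiv, hmod]
    have := choose_two_add_choose_two_le (Nat.le_add_right a (b % k)) (Nat.le_add_left _ a) le_rfl
    simp only [Nat.sub_self, Nat.choose_zero_succ, add_zero] at this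
    linarith
  · obtain ⟨hdiv, hmod⟩ := (Nat.div_mod_unique hk).2
      ⟨(by rw [mul_add]; omega : a + b % k - k + k * (b / k + 1) = a + b), (by omega)⟩
    rw [hdiv, hmod, add_one_mul]
    linarith [choose_two_add_choose_two_le ha hbk.le (not_lt.1 hfit)]

lemma sum_choose_two_le_maxFailureEdges {ι : Type*} {k : ℕ} (s : Finset ι) (f : ι → ℕ)
    (hf : ∀ i ∈ s, f i ≤ k) :
    ∑ i ∈ s, (f i).choose 2 ≤ maxFailureEdges k (∑ i ∈ s, f i) := by
  induction s using Finset.cons_induction with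
  | empty => simp [maxFailureEdges]
  | cons i s hi ih =>
    rw [Finset.sum_cons, Finset.sum_cons]
    have hs := ih fun j hj => hf j (Finset.mem_cons_of_mem hj)
    exact (Nat.add_le_add_left hs _).trans
      (choose_two_add_maxFailureEdges_le _ (hf i (Finset.mem_cons_self i s)))

namespace SimpleGraph

open Finset

variable {V ι : Type*}

def clusterGraph (c : V → ι) : SimpleGraph V where
  Adj u v := u ≠ v ∧ c u = c v
  symm := ⟨fun _ _ h => ⟨h.1.symm, h.2.symm⟩⟩
  loopless := ⟨fun _ h => h.1 rfl⟩

@[simp]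
lemma clusterGraph_adj {c : V → ι} {u v : V} : (clusterGraph c).Adj u v ↔ u ≠ v ∧ c u = c v :=
  Iff.rfl

lemma Reachable.eq_of_clusterGraph {c : V → ι} {u v : V} (h : (clusterGraph c).Reachable u v) :
    c u = c v := by
  obtain ⟨w⟩ := h
  induction w with
  | nil => rfl
  | cons hadj _ ih => exact hadj.2.trans ih

lemma le_clusterGraph_connectedComponentMk (G : SimpleGraph V) :
    G ≤ clusterGraph G.connectedComponentMk :=
  fun _ _ h => ⟨h.ne, ConnectedComponent.eq.2 h.reachable⟩

lemma failureState_clusterGraph [Fintype V] [DecidableEq ι] {c : V → ι} {k : ℕ}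
    (hc : ∀ i, #{v | c v = i} ≤ k) : failureState (clusterGraph c) k := by
  intro v
  have hsupp : ((clusterGraph c).connectedComponentMk v).supp ⊆ ↑({w | c w = c v} : Finset V) :=
    fun w hw => by
      simpa using
        (ConnectedComponent.eq.1 ((ConnectedComponent.mem_supp_iff _ w).1 hw)).eq_of_clusterGraph
  exact (Set.ncard_le_ncard hsupp).trans ((Set.ncard_coe_finset _).trans_le (hc _))

lemma ncard_edgeSet_clusterGraph [Fintype V] [DecidableEq ι] (c : V → ι) (t : Finset ι)
    (ht : ∀ v, c v ∈ t) :
    (clusterGraph c).edgeSet.ncard = ∑ i ∈ t, (#{v | c v = i}).choose 2 := by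
  classical
  have hdegree (v : V) : (clusterGraph c).degree v = #{w | c w = c v} - 1 := by
    have : (clusterGraph c).neighborFinset v = ({w | c w = c v} : Finset V).erase v := by
      ext w
      simp [eq_comm]
    rw [← card_neighborFinset_eq_degree, this, card_erase_of_mem (by simp)]
  have htwice := sum_degrees_eq_twice_card_edges (clusterGraph c)
  rw [← sum_fiberwise_of_maps_to (fun v _ => ht v)] at htwice
  simp only [hdegree] at htwice
  rw [← coe_edgeFinset, Set.ncard_coe_finset]
  refine Nat.eq_of_mul_eq_mul_left two_pos (htwice.symm.trans ?_)
  rw [mul_sum]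
  refine sum_congr rfl fun i _ => ?_
  rw [sum_congr rfl fun v hv => by rw [(mem_filter.1 hv).2], sum_const,
    smul_eq_mul, two_mul_choose_two]

lemma ncard_edgeSet_le_maxFailureEdges [Fintype V] {G : SimpleGraph V} {k : ℕ}
    (hG : failureState G k) : G.edgeSet.ncard ≤ maxFailureEdges k (Fintype.card V) := by
  classical
  have hcomponent (C : G.ConnectedComponent) : #{v | G.connectedComponentMk v = C} ≤ k := by
    induction C using ConnectedComponent.ind with
    | h v =>
      have : (({w | G.connectedComponentMk w = G.connectedComponentMk v} : Finset V) : Set V) =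
          (G.connectedComponentMk v).supp := by
        ext w
        simp [ConnectedComponent.mem_supp_iff]
      rw [← Set.ncard_coe_finset, this]
      exact hG v
  calc G.edgeSet.ncard ≤ (clusterGraph G.connectedComponentMk).edgeSet.ncard :=
        Set.ncard_le_ncard (edgeSet_mono (le_clusterGraph_connectedComponentMk G))
    _ = ∑ C, (#{v | G.connectedComponentMk v = C}).choose 2 :=
        ncard_edgeSet_clusterGraph _ _ fun _ => mem_univ _
    _ ≤ maxFailureEdges k (∑ C, #{v | G.connectedComponentMk v = C}) :=
        sum_choose_two_le_maxFailureEdges _ _ fun C _ => hcomponent C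
    _ = maxFailureEdges k (Fintype.card V) := by
        rw [← card_univ, card_eq_sum_card_fiberwise fun v _ => mem_univ (G.connectedComponentMk v)]

lemma card_filter_div_eq {n k : ℕ} (hk : 0 < k) (i : ℕ) :
    #{v : Fin n | (v : ℕ) / k = i} = min k (n - i * k) := by
  have hfiber : ({v : Fin n | (v : ℕ) / k = i} : Finset (Fin n)) =
      ({v : Fin n | (v : ℕ) < i * k + k} : Finset (Fin n)) \
        ({v : Fin n | (v : ℕ) < i * k} : Finset (Fin n)) := by
    ext v
    simp only [mem_sdiff, mem_filter, mem_univ, true_and, not_lt, Nat.div_eq_iff hk]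
    generalize i * k = m
    omega
  rw [hfiber, card_sdiff_of_subset fun v => by simp only [mem_filter, mem_univ, true_and]; omega,
    Fin.card_filter_val_lt, Fin.card_filter_val_lt]
  omega

lemma ncard_edgeSet_clusterGraph_div {n k : ℕ} (hk : 0 < k) :
    (clusterGraph fun v : Fin n => (v : ℕ) / k).edgeSet.ncard = maxFailureEdges k n := by
  have hrange (v : Fin n) : (v : ℕ) / k ∈ range (n / k + 1) :=
    mem_range_succ_iff.2 (Nat.div_le_div_right v.isLt.le)
  rw [ncard_edgeSet_clusterGraph _ _ hrange, sum_range_succ, card_filter_div_eq hk,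
    ← Nat.mod_eq_sub_div_mul, min_eq_right (Nat.mod_lt n hk).le, maxFailureEdges,
    sum_congr rfl fun i hi => ?_, sum_const, card_range, smul_eq_mul]
  have : i * k + k ≤ n := by
    have := Nat.div_mul_le_self n k
    nlinarith [mem_range.1 hi]
  rw [card_filter_div_eq hk, min_eq_left (by omega)]

lemma COe_eq_ncard_edgeSet_sub {G : SimpleGraph V} [Finite V] {k M : ℕ}
    (hle : ∀ H ≤ G, failureState H k → H.edgeSet.ncard ≤ M)
    {H₀ : SimpleGraph V} (hH₀ : H₀ ≤ G) (hfail : failureState H₀ k)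
    (hcard : H₀.edgeSet.ncard = M) :
    COe G k = G.edgeSet.ncard - M := by
  have hmem : G.edgeSet.ncard - M ∈ {c | ∃ E' : Set (Sym2 V), E' ⊆ G.edgeSet ∧ E'.ncard = c ∧
      failureState (G.deleteEdges E') k} :=
    ⟨G.edgeSet \ H₀.edgeSet, Set.sdiff_subset, by rw [Set.ncard_sdiff (edgeSet_mono hH₀), hcard],
      by rwa [deleteEdges_sdiff_eq_of_le hH₀]⟩
  refine le_antisymm (Nat.sInf_le hmem) (le_csInf ⟨_, hmem⟩ ?_)
  rintro _ ⟨E', hE', rfl, hfail'⟩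
  have hrest := hle _ (deleteEdges_le E') hfail'
  rw [edgeSet_deleteEdges, Set.ncard_sdiff hE'] at hrest
  have := Set.ncard_le_ncard hE'
  omega

lemma COe_top_fin {n k : ℕ} (hk : 0 < k) :
    COe (⊤ : SimpleGraph (Fin n)) k = n.choose 2 - maxFailureEdges k n := by
  classical
  rw [COe_eq_ncard_edgeSet_sub
    (fun _ _ hH => (ncard_edgeSet_le_maxFailureEdges hH).trans_eq (by simp)) le_top
    (failureState_clusterGraph fun i => (card_filter_div_eq hk i).trans_le (min_le_left _ _))
    (ncard_edgeSet_clusterGraph_div hk), ← coe_edgeFinset, Set.ncard_coe_finset,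
    card_edgeFinset_top_eq_card_choose_two, Fintype.card_fin]

end SimpleGraph

theorem completeCOe_general (n p q : ℕ) (k : ℕ) (hn : n = p * k + q) (hq : q < k) :
    COe (⊤ : SimpleGraph (Fin n)) k =
      n.choose 2 - p * k.choose 2 - q.choose 2 := by
  have hk : 0 < k := by omega
  obtain ⟨rfl, rfl⟩ : n / k = p ∧ n % k = q :=
    (Nat.div_mod_unique hk).2 ⟨by rw [hn, mul_comm, add_comm], hq⟩
  rw [SimpleGraph.COe_top_fin hk, maxFailureEdges, Nat.sub_sub]

theorem completeCOe (n p q : ℕ) (r : ℝ) (hr0 : 0 < r) (hr1 : r < 1)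
    (k : ℕ) (hk : k = ⌊r * n⌋₊) (hk1 : 1 ≤ k) (hn : n = p * k + q) (hq : q < k) :
    COe (⊤ : SimpleGraph (Fin n)) k =
      n.choose 2 - p * k.choose 2 - q.choose 2 :=
  completeCOe_general n p q k hn hq
end

section
/- Let $G$ be a simple graph on $n$ vertices in which every connected component has at most $k$ vertices, where $1 \leq k \leq n$. Write $n = pk + q$ with $0 \leq q < k$. Then the number of edges of $G$ satisfies $|E(G)| \leq p\binom{k}{2} + \binom{q}{2}$. -/
open SimpleGraph

/-!
A vertex has fewer neighbours than its component has vertices, so by the degree sum a component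
with `c` vertices carries at most `c.choose 2` edges, and it remains to bound `∑ (cᵢ).choose 2`
over sizes `cᵢ ≤ k` with `∑ cᵢ = n`. Adding the parts one at a time to a packing of cliques of
size `k` plus one remainder clique, a new part of size `s` either merges with the remainder or
is traded, together with it, for a full clique and a new remainder. Neither move loses edges,
since `(a + b).choose 2 = a.choose 2 + b.choose 2 + a * b` and `k * m ≤ a * b` whenever
`a + b = k + m` with `a, b ≤ k`.
-/

open Finset

theorem Nat.choose_two_add (a b : ℕ) : (a + b).choose 2 = a.choose 2 + b.choose 2 + a * b := by
  qify
  push_cast [Nat.cast_choose_two]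
  ring

theorem Nat.choose_two_add_choose_two_le {a b k m : ℕ} (ha : a ≤ k) (hb : b ≤ k)
    (h : a + b = k + m) : a.choose 2 + b.choose 2 ≤ k.choose 2 + m.choose 2 := by
  have hsplit := (Nat.choose_two_add a b).symm.trans (h ▸ Nat.choose_two_add k m)
  have hprod : k * m ≤ a * b := by nlinarith
  omega

/-- The number of edges of the disjoint union of `n / k` copies of `K_k` and one `K_(n % k)`. -/
def cliqueUnionEdges (k n : ℕ) : ℕ := n / k * k.choose 2 + (n % k).choose 2

theorem cliqueUnionEdges_eq {k n p q : ℕ} (hn : n = p * k + q) (hq : q < k) :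
    cliqueUnionEdges k n = p * k.choose 2 + q.choose 2 := by
  obtain ⟨hdiv, hmod⟩ := (Nat.div_mod_unique (b := k) (a := n) (Nat.zero_lt_of_lt hq)).2
    ⟨by rw [hn, mul_comm, add_comm], hq⟩
  rw [cliqueUnionEdges, hdiv, hmod]

theorem choose_two_add_cliqueUnionEdges_le {k n s : ℕ} (hk : 0 < k) (hs : s ≤ k) :
    s.choose 2 + cliqueUnionEdges k n ≤ cliqueUnionEdges k (n + s) := by
  have hn : n = n / k * k + n % k := (Nat.div_add_mod' n k).symm
  have hq : n % k < k := Nat.mod_lt n hk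
  rw [cliqueUnionEdges]
  rcases lt_or_ge (n % k + s) k with hlt | hge
  · rw [cliqueUnionEdges_eq (p := n / k) (q := n % k + s) (by omega) hlt]
    have := Nat.choose_two_add (n % k) s
    omega
  · rw [cliqueUnionEdges_eq (p := n / k + 1) (q := n % k + s - k) (by rw [add_one_mul]; omega)
      (by omega)]
    have := Nat.choose_two_add_choose_two_le hq.le hs (Nat.add_sub_of_le hge).symm
    rw [add_one_mul]
    omega

theorem sum_choose_two_le_cliqueUnionEdges {ι : Type*} {k : ℕ} (hk : 0 < k) (s : Finset ι)
    (f : ι → ℕ) (hf : ∀ i ∈ s, f i ≤ k) :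
    ∑ i ∈ s, (f i).choose 2 ≤ cliqueUnionEdges k (∑ i ∈ s, f i) := by
  classical
  induction s using Finset.induction_on with
  | empty => simp [cliqueUnionEdges]
  | insert a s ha ih =>
    rw [sum_insert ha, sum_insert ha, add_comm (f a)]
    grw [ih fun i hi ↦ hf i (mem_insert_of_mem hi)]
    exact choose_two_add_cliqueUnionEdges_le hk (hf a (mem_insert_self a s))

namespace SimpleGraph
variable {V : Type*} [Fintype V] (G : SimpleGraph V)

theorem ConnectedComponent.card_filter_eq_ncard_supp (c : G.ConnectedComponent)
    [DecidablePred (G.connectedComponentMk · = c)] :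
    #{v | G.connectedComponentMk v = c} = c.supp.ncard := by
  rw [← Set.ncard_coe_finset]
  congr 1
  ext v
  simp [ConnectedComponent.mem_supp_iff]

theorem sum_ncard_supp [Fintype G.ConnectedComponent] :
    ∑ c : G.ConnectedComponent, c.supp.ncard = Fintype.card V := by
  classical
  simp_rw [← ConnectedComponent.card_filter_eq_ncard_supp]
  exact card_eq_sum_card_fiberwise (fun v _ ↦ mem_univ _) |>.symm

theorem degree_lt_ncard_supp [DecidableRel G.Adj] (v : V) :
    G.degree v < (G.connectedComponentMk v).supp.ncard := by
  have hsub : G.neighborSet v ⊆ (G.connectedComponentMk v).supp := fun w hw ↦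
    ((G.connectedComponentMk v).mem_supp_congr_adj hw).1 rfl
  rw [← card_neighborSet_eq_degree, ← Nat.card_eq_fintype_card, Nat.card_coe_set_eq]
  exact Set.ncard_lt_ncard
    ((Set.ssubset_iff_of_subset hsub).2 ⟨v, rfl, G.notMem_neighborSet_self⟩)

theorem card_edgeFinset_le_sum_choose_two [DecidableRel G.Adj] [Fintype G.ConnectedComponent] :
    #G.edgeFinset ≤ ∑ c : G.ConnectedComponent, c.supp.ncard.choose 2 := by
  classical
  suffices 2 * #G.edgeFinset ≤ 2 * ∑ c : G.ConnectedComponent, c.supp.ncard.choose 2 by omega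
  calc 2 * #G.edgeFinset = ∑ v, G.degree v := (sum_degrees_eq_twice_card_edges G).symm
    _ ≤ ∑ v, ((G.connectedComponentMk v).supp.ncard - 1) :=
      sum_le_sum fun v _ ↦ Nat.le_sub_one_of_lt (G.degree_lt_ncard_supp v)
    _ = ∑ c : G.ConnectedComponent, c.supp.ncard * (c.supp.ncard - 1) := by
      rw [← sum_fiberwise' univ G.connectedComponentMk (fun c ↦ c.supp.ncard - 1)]
      simp_rw [sum_const, ConnectedComponent.card_filter_eq_ncard_supp, smul_eq_mul]
    _ = 2 * ∑ c : G.ConnectedComponent, c.supp.ncard.choose 2 := by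
      rw [mul_sum]
      refine sum_congr rfl fun c _ ↦ ?_
      rw [Nat.choose_two_right, Nat.mul_div_cancel' (Nat.even_mul_pred_self _).two_dvd]

end SimpleGraph

theorem maxEdgesFailureState_general {V : Type*} [Fintype V] (G : SimpleGraph V)
    (n k p q : ℕ) (hV : Fintype.card V = n)
    (hn : n = p * k + q) (hq : q < k) (hfail : failureState G k) :
    G.edgeSet.ncard ≤ p * k.choose 2 + q.choose 2 := by
  classical
  have hsupp (c : G.ConnectedComponent) : c.supp.ncard ≤ k := c.ind hfail
  calc G.edgeSet.ncard = #G.edgeFinset := by rw [← coe_edgeFinset, Set.ncard_coe_finset]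
    _ ≤ ∑ c : G.ConnectedComponent, c.supp.ncard.choose 2 := G.card_edgeFinset_le_sum_choose_two
    _ ≤ cliqueUnionEdges k (∑ c : G.ConnectedComponent, c.supp.ncard) :=
      sum_choose_two_le_cliqueUnionEdges (Nat.zero_lt_of_lt hq) _ _ fun c _ ↦ hsupp c
    _ = p * k.choose 2 + q.choose 2 := by rw [G.sum_ncard_supp, hV, cliqueUnionEdges_eq hn hq]

theorem maxEdgesFailureState {V : Type*} [Fintype V] (G : SimpleGraph V)
    (n k p q : ℕ) (hV : Fintype.card V = n) (hk1 : 1 ≤ k) (hkn : k ≤ n)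
    (hn : n = p * k + q) (hq : q < k) (hfail : failureState G k) :
    G.edgeSet.ncard ≤ p * k.choose 2 + q.choose 2 :=
  maxEdgesFailureState_general G n k p q hV hn hq hfail
end

section
/- Fix $n$, $0 < r < 1$ with $k = \lfloor rn \rfloor \geq 1$, write $n = pk + q$ with $0 \leq q < k$, and for $0 \leq \kappa \leq n - k$ define $f(\kappa) = \kappa(n - \kappa) + \binom{\kappa}{2} + p'\binom{k}{2} + \binom{q'}{2}$ where $n - \kappa = p'k + q'$, $0 \leq q' < k$. Then for $0 \leq m \leq \binom{n}{2}$: $\min_{G \in G(n,m)} CO_v^r(G) = 0$ if $m \leq f(0)$, and $\min_{G \in G(n,m)} CO_v^r(G) = \kappa$ if $f(\kappa - 1) < m \leq f(\kappa)$. -/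
open SimpleGraph

/-- `fmax n k κ` : the maximum number of edges of a graph on `n` vertices with
`COv` equal to `κ`, where `n - κ = p' k + q'`, `0 ≤ q' < k`. -/
def fmax (n k κ : ℕ) : ℕ :=
  κ * (n - κ) + κ.choose 2 + ((n - κ) / k) * k.choose 2 + ((n - κ) % k).choose 2



section counting
variable {α : Type*} [DecidableEq α]

/-- nondiagonal pairs from a finset -/
private def ndpairs (s : Finset α) : Finset (Sym2 α) := s.sym2.filter (fun e => ¬ e.IsDiag)

private lemma mem_ndpairs {s : Finset α} {x y : α} :
    s(x, y) ∈ ndpairs s ↔ (x ∈ s ∧ y ∈ s) ∧ x ≠ y := by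
  simp [ndpairs, Finset.mk_mem_sym2_iff]

private lemma ndpairs_nondiag {s : Finset α} {e : Sym2 α} (he : e ∈ ndpairs s) : ¬ e.IsDiag :=
  (Finset.mem_filter.mp he).2

private lemma ndpairs_mono {s t : Finset α} (h : s ⊆ t) : ndpairs s ⊆ ndpairs t :=
  Finset.filter_subset_filter _ (Finset.sym2_mono h)

private lemma ndpairs_disjoint {s t : Finset α} (h : Disjoint s t) :
    Disjoint (ndpairs s) (ndpairs t) := by
  rw [Finset.disjoint_left]
  intro e hes het
  induction e with
  | _ x y =>
    rw [mem_ndpairs] at hes het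
    exact Finset.disjoint_left.mp h hes.1.1 het.1.1

private lemma card_ndpairs (s : Finset α) : (ndpairs s).card = s.card.choose 2 := by
  have hsplit := Finset.card_filter_add_card_filter_not
    (s := s.sym2) (p := fun e => e.IsDiag)
  have hdiag : s.sym2.filter (fun e => e.IsDiag) = s.image Sym2.diag := by
    ext e
    induction e with
    | _ x y =>
      simp only [Finset.mem_filter, Finset.mk_mem_sym2_iff, Sym2.mk_isDiag_iff,
        Finset.mem_image]
      constructor
      · rintro ⟨⟨hx, _⟩, rfl⟩; exact ⟨x, hx, rfl⟩
      · rintro ⟨a, ha, he⟩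
        have hxa : x = a ∧ y = a := by
          have := he; rw [Sym2.diag] at this
          rw [Sym2.eq_iff] at this
          tauto
        obtain ⟨rfl, rfl⟩ := hxa
        exact ⟨⟨ha, ha⟩, rfl⟩
  have hcd : (s.image Sym2.diag).card = s.card := Finset.card_image_of_injective _ Sym2.diag_injective
  have hsym2 : s.sym2.card = (s.card + 1).choose 2 := Finset.card_sym2 s
  have hch : (s.card + 1).choose 2 = s.card + s.card.choose 2 := by
    rw [Nat.choose_succ_succ, Nat.choose_one_right]
  rw [hdiag] at hsplit
  unfold ndpairs
  omega
end counting

section ncardhelp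

private lemma ncard_le_of_image_subset {A B : Type*} {s : Set A} {t : Set B} (f : A → B)
    (hf : Function.Injective f) (h : f '' s ⊆ t) (ht : t.Finite) : s.ncard ≤ t.ncard := by
  calc s.ncard = (f '' s).ncard := (Set.ncard_image_of_injective _ hf).symm
    _ ≤ t.ncard := Set.ncard_le_ncard h ht

end ncardhelp

section graphlemmas
variable {V : Type*}

private lemma supp_induce_subset (G : SimpleGraph V) (s : Set V) (w : s) :
    ((G.induce s).connectedComponentMk w).supp ⊆
      Subtype.val ⁻¹' (G.connectedComponentMk ↑w).supp := by
  intro u hu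
  rw [ConnectedComponent.mem_supp_iff, ConnectedComponent.eq] at hu
  rw [Set.mem_preimage, ConnectedComponent.mem_supp_iff, ConnectedComponent.eq]
  exact hu.map (Embedding.induce s).toHom

private lemma failureState_induce [Fintype V] {G : SimpleGraph V} {k : ℕ}
    (h : failureState G k) (s : Set V) : failureState (G.induce s) k := by
  intro w
  refine le_trans (ncard_le_of_image_subset Subtype.val Subtype.val_injective ?_
    (Set.toFinite _)) (h ↑w)
  rw [Set.image_subset_iff]
  exact supp_induce_subset G s w

private lemma adj_mem_supp {G : SimpleGraph V} {x y : V} (h : G.Adj x y)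
    {C : G.ConnectedComponent} (hx : x ∈ C.supp) : y ∈ C.supp := by
  rw [ConnectedComponent.mem_supp_iff] at hx ⊢
  rw [← hx, ConnectedComponent.eq]
  exact h.symm.reachable

end graphlemmas


private lemma c2 (n : ℕ) : (n.choose 2 : ℤ) * 2 = n * n - n := by
  induction n with
  | zero => simp
  | succ n ih =>
    rw [Nat.choose_succ_succ, Nat.choose_one_right]
    push_cast
    push_cast at ih
    nlinarith [ih]

private lemma choose2_add_le (a b : ℕ) : a.choose 2 + b.choose 2 ≤ (a + b).choose 2 := by
  have h1 := c2 a; have h2 := c2 b; have h3 := c2 (a + b)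
  have ha : (0:ℤ) ≤ a := Int.natCast_nonneg a
  have hb : (0:ℤ) ≤ b := Int.natCast_nonneg b
  have : (a.choose 2 : ℤ) + b.choose 2 ≤ ((a+b).choose 2 : ℤ) := by
    push_cast at h3
    nlinarith [mul_nonneg ha hb]
  exact_mod_cast this

private lemma choose2_convex {x a k q : ℕ} (hx : x ≤ k) (ha : a ≤ k) (hsum : x + a = k + q) :
    x.choose 2 + a.choose 2 ≤ k.choose 2 + q.choose 2 := by
  have h1 := c2 x; have h2 := c2 a; have h3 := c2 k; have h4 := c2 q
  have hx' : (x:ℤ) ≤ k := by exact_mod_cast hx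
  have ha' : (a:ℤ) ≤ k := by exact_mod_cast ha
  have hs' : (x:ℤ) + a = k + q := by exact_mod_cast hsum
  have : (x.choose 2 : ℤ) + a.choose 2 ≤ (k.choose 2 : ℤ) + q.choose 2 := by
    nlinarith [mul_nonneg (sub_nonneg.mpr hx') (sub_nonneg.mpr ha')]
  exact_mod_cast this

private lemma chooseId (c d : ℕ) : (c + d).choose 2 = c.choose 2 + d.choose 2 + c * d := by
  have h3 := c2 (c+d)
  rw [Nat.cast_add] at h3
  have h : ((c+d).choose 2 : ℤ) * 2 = ((c.choose 2 : ℤ) + d.choose 2 + c * d) * 2 := by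
    linear_combination h3 - c2 c - c2 d
  have : ((c+d).choose 2 : ℤ) = (c.choose 2 : ℤ) + d.choose 2 + c * d := by linarith
  exact_mod_cast this

/-- capacity of `N` vertices split into cliques of size at most `k`. -/
private def gcap (k N : ℕ) : ℕ := (N / k) * k.choose 2 + (N % k).choose 2

private lemma gcap_cliques (k : ℕ) (hk : 0 < k) (p r : ℕ) (hr : r < k) :
    gcap k (k * p + r) = p * k.choose 2 + r.choose 2 := by
  unfold gcap
  rw [Nat.add_comm (k * p) r, Nat.add_mul_div_left _ _ hk, Nat.add_mul_mod_self_left,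
    Nat.div_eq_of_lt hr, Nat.mod_eq_of_lt hr, Nat.zero_add]

private lemma gcap_step {k a N : ℕ} (hk : 0 < k) (hak : a ≤ k) (haN : a ≤ N) :
    gcap k (N - a) + a.choose 2 ≤ gcap k N := by
  obtain ⟨p, q, hqk, rfl⟩ : ∃ p q, q < k ∧ k * p + q = N :=
    ⟨N / k, N % k, Nat.mod_lt _ hk, Nat.div_add_mod N k⟩
  rcases le_or_gt a q with h | h
  · have h1 : k * p + q - a = k * p + (q - a) := by omega
    rw [h1, gcap_cliques k hk p (q - a) (by omega), gcap_cliques k hk p q hqk]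
    have := choose2_add_le (q - a) a
    rw [show q - a + a = q by omega] at this
    omega
  · obtain ⟨p', rfl⟩ : ∃ p', p = p' + 1 := by
      rcases Nat.eq_zero_or_pos p with h0 | h0
      · exfalso; rw [h0, Nat.mul_zero] at haN; omega
      · exact ⟨p - 1, by omega⟩
    have hkp : k * (p' + 1) = k * p' + k := by ring
    have h1 : k * (p' + 1) + q - a = k * p' + (k + q - a) := by omega
    rw [h1, gcap_cliques k hk p' (k + q - a) (by omega),
      gcap_cliques k hk (p' + 1) q hqk]
    have hstep : (k + q - a).choose 2 + a.choose 2 ≤ k.choose 2 + q.choose 2 :=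
      choose2_convex (by omega) hak (by omega)
    have hmul : (p' + 1) * k.choose 2 = p' * k.choose 2 + k.choose 2 := by ring
    omega

private lemma gcap_pred {k N : ℕ} (hk : 0 < k) (hN : 1 ≤ N) :
    gcap k N ≤ gcap k (N - 1) + (k - 1) := by
  obtain ⟨p, q, hqk, rfl⟩ : ∃ p q, q < k ∧ k * p + q = N :=
    ⟨N / k, N % k, Nat.mod_lt _ hk, Nat.div_add_mod N k⟩
  rcases Nat.eq_zero_or_pos q with h0 | h0
  · obtain ⟨p', rfl⟩ : ∃ p', p = p' + 1 := by
      rcases Nat.eq_zero_or_pos p with hp0 | hp0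
      · exfalso; rw [hp0, Nat.mul_zero] at hN; omega
      · exact ⟨p - 1, by omega⟩
    have hkp : k * (p' + 1) = k * p' + k := by ring
    have h1 : k * (p' + 1) + q - 1 = k * p' + (k - 1) := by omega
    rw [h1, gcap_cliques k hk p' (k - 1) (by omega), gcap_cliques k hk (p' + 1) q hqk]
    obtain ⟨k', rfl⟩ : ∃ k', k = k' + 1 := ⟨k - 1, by omega⟩
    have hck : (k' + 1).choose 2 = k' + k'.choose 2 := by
      rw [Nat.choose_succ_succ, Nat.choose_one_right]
    have hmul : (p' + 1) * (k' + 1).choose 2 = p' * (k' + 1).choose 2 + (k' + 1).choose 2 := by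
      ring
    simp only [Nat.add_sub_cancel, h0]
    have h02 : Nat.choose 0 2 = 0 := rfl
    omega
  · have h1 : k * p + q - 1 = k * p + (q - 1) := by omega
    rw [h1, gcap_cliques k hk p (q - 1) (by omega), gcap_cliques k hk p q hqk]
    obtain ⟨q', rfl⟩ : ∃ q', q = q' + 1 := ⟨q - 1, by omega⟩
    have hcq : (q' + 1).choose 2 = q' + q'.choose 2 := by
      rw [Nat.choose_succ_succ, Nat.choose_one_right]
    simp only [Nat.add_sub_cancel]
    omega

private lemma maxEdges {k : ℕ} (hk : 0 < k) :
    ∀ N : ℕ, ∀ (V : Type) (_ : Fintype V) (G : SimpleGraph V), Fintype.card V = N →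
      failureState G k → G.edgeSet.ncard ≤ gcap k N := by
  intro N
  induction N using Nat.strong_induction_on with
  | _ N ih =>
    intro V instV G hcard hfail
    classical
    rcases Nat.eq_zero_or_pos N with h0 | hpos
    · subst h0
      have hV : IsEmpty V := Fintype.card_eq_zero_iff.mp hcard
      have hempty : G.edgeSet = ∅ := by
        ext e
        refine e.ind (fun x y => ?_)
        exact iff_of_false (fun h => hV.elim x) (fun h => h.elim)
      rw [hempty]
      simp
    · have hne : Nonempty V := Fintype.card_pos_iff.mp (by omega)
      obtain ⟨v⟩ := hne
      set C : Set V := (G.connectedComponentMk v).supp with hC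
      have hvC : v ∈ C := by
        rw [hC, ConnectedComponent.mem_supp_iff]
      have haK : C.ncard ≤ k := hfail v
      have ha1 : 1 ≤ C.ncard := by
        rw [Nat.one_le_iff_ne_zero]
        intro h
        rw [Set.ncard_eq_zero (Set.toFinite _)] at h
        rw [h] at hvC
        exact hvC
      have hclosed : ∀ x y : V, G.Adj x y → x ∈ C → y ∈ C := by
        intro x y hxy hx
        exact adj_mem_supp hxy hx
      set CF : Finset V := C.toFinset with hCF
      have hCFcard : CF.card = C.ncard := (Set.ncard_eq_toFinset_card' C).symm
      -- complement
      have hcompl : C.ncard + (Cᶜ : Set V).ncard = N := by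
        rw [← hcard, ← Nat.card_eq_fintype_card, ← Set.ncard_add_ncard_compl C]
      have hcardc : Fintype.card (Cᶜ : Set V) = N - C.ncard := by
        rw [← Nat.card_eq_fintype_card, Nat.card_coe_set_eq]
        omega
      have hfail' : failureState (G.induce (Cᶜ : Set V)) k := failureState_induce hfail _
      have hIH := ih (N - C.ncard) (by omega) (Cᶜ : Set V) inferInstance
        (G.induce (Cᶜ : Set V)) hcardc hfail'
      -- decomposition
      have hsub : G.edgeSet ⊆ ↑(ndpairs CF) ∪
          (Sym2.map (Subtype.val : (Cᶜ : Set V) → V) '' (G.induce (Cᶜ : Set V)).edgeSet) := by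
        intro e he
        revert he
        refine e.ind (fun x y => fun he => ?_)
        have hadj : G.Adj x y := he
        by_cases hx : x ∈ C
        · left
          have hy : y ∈ C := hclosed x y hadj hx
          rw [Finset.mem_coe, mem_ndpairs]
          exact ⟨⟨Set.mem_toFinset.mpr hx, Set.mem_toFinset.mpr hy⟩, hadj.ne⟩
        · right
          have hy : y ∉ C := fun hy => hx (hclosed y x hadj.symm hy)
          refine ⟨s(⟨x, hx⟩, ⟨y, hy⟩), ?_, rfl⟩
          exact hadj
      have hcount : G.edgeSet.ncard ≤ C.ncard.choose 2 + gcap k (N - C.ncard) := by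
        calc G.edgeSet.ncard ≤ (↑(ndpairs CF) ∪
            (Sym2.map (Subtype.val : (Cᶜ : Set V) → V) ''
              (G.induce (Cᶜ : Set V)).edgeSet)).ncard :=
              Set.ncard_le_ncard hsub (Set.toFinite _)
          _ ≤ (↑(ndpairs CF) : Set (Sym2 V)).ncard +
              (Sym2.map (Subtype.val : (Cᶜ : Set V) → V) ''
                (G.induce (Cᶜ : Set V)).edgeSet).ncard := Set.ncard_union_le _ _
          _ ≤ C.ncard.choose 2 + gcap k (N - C.ncard) := by
              have h1 : (↑(ndpairs CF) : Set (Sym2 V)).ncard = C.ncard.choose 2 := by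
                rw [Set.ncard_coe_finset, card_ndpairs, hCFcard]
              have h2 : (Sym2.map (Subtype.val : (Cᶜ : Set V) → V) ''
                  (G.induce (Cᶜ : Set V)).edgeSet).ncard =
                  (G.induce (Cᶜ : Set V)).edgeSet.ncard :=
                Set.ncard_image_of_injective _ (Sym2.map.injective Subtype.val_injective)
              rw [h1, h2]
              exact Nat.add_le_add_left hIH _
      calc G.edgeSet.ncard ≤ C.ncard.choose 2 + gcap k (N - C.ncard) := hcount
        _ = gcap k (N - C.ncard) + C.ncard.choose 2 := by omega
        _ ≤ gcap k N := gcap_step hk haK (by omega)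



private def iv (n a b : ℕ) : Finset (Fin n) :=
  Finset.univ.filter (fun v => a ≤ v.val ∧ v.val < b)

private lemma mem_iv {n a b : ℕ} {v : Fin n} : v ∈ iv n a b ↔ a ≤ v.val ∧ v.val < b := by
  simp [iv]

private lemma card_iv (n a b : ℕ) (hb : b ≤ n) : (iv n a b).card = b - a := by
  rw [← Nat.card_Ico a b]
  apply Finset.card_bij (fun v _ => v.val)
  · intro v hv; rw [Finset.mem_Ico]; exact mem_iv.mp hv
  · intro v hv w hw h; exact Fin.val_injective h
  · intro x hx
    rw [Finset.mem_Ico] at hx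
    exact ⟨⟨x, lt_of_lt_of_le hx.2 hb⟩, mem_iv.mpr ⟨hx.1, hx.2⟩, rfl⟩

private lemma constr (n k κ m : ℕ) (hk1 : 0 < k) (hκ : κ + k ≤ n) (hm : m ≤ fmax n k κ) :
    ∃ G : SimpleGraph (Fin n), G.edgeSet.ncard = m ∧
      ∃ S : Set (Fin n), S.ncard = κ ∧ vertexDisconnects G k S := by
  classical
  obtain ⟨p', q', hq'k, hNd⟩ : ∃ p q, q < k ∧ k * p + q = n - κ :=
    ⟨(n - κ) / k, (n - κ) % k, Nat.mod_lt _ hk1, Nat.div_add_mod _ k⟩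
  have hdiv : (n - κ) / k = p' := by
    have hcomm : p' * k = k * p' := Nat.mul_comm _ _
    have h2 : (p' + 1) * k = p' * k + k := by ring
    exact Nat.div_eq_of_lt_le (by omega) (by omega)
  have hmod : (n - κ) % k = q' := by
    have := Nat.div_add_mod (n - κ) k
    rw [hdiv] at this
    omega
  -- the parts
  set part : ℕ → Finset (Fin n) := fun i => iv n (κ + i * k) (min (κ + (i + 1) * k) n)
    with hpart
  have hmem_part : ∀ (i : ℕ) (v : Fin n),
      v ∈ part i ↔ κ + i * k ≤ v.val ∧ v.val < κ + (i + 1) * k := by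
    intro i v
    rw [hpart]
    simp only [mem_iv, lt_min_iff]
    exact ⟨fun h => ⟨h.1, h.2.1⟩, fun h => ⟨h.1, h.2, v.isLt⟩⟩
  have hidx : ∀ v : Fin n, κ ≤ v.val → v ∈ part ((v.val - κ) / k) := by
    intro v hv
    rw [hmem_part]
    have h1 := Nat.div_add_mod (v.val - κ) k
    have h2 := Nat.mod_lt (v.val - κ) hk1
    have h3 : ((v.val - κ) / k) * k = k * ((v.val - κ) / k) := Nat.mul_comm _ _
    have h4 : ((v.val - κ) / k + 1) * k = k * ((v.val - κ) / k) + k := by ring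
    omega
  have hpartIdx : ∀ (i : ℕ) (v : Fin n), v ∈ part i → κ ≤ v.val ∧ (v.val - κ) / k = i := by
    intro i v hv
    rw [hmem_part] at hv
    have h4 : (i + 1) * k = i * k + k := by ring
    refine ⟨by omega, Nat.div_eq_of_lt_le (by omega) (by omega)⟩
  have hcard_part : ∀ i, (part i).card = min (κ + (i + 1) * k) n - (κ + i * k) := by
    intro i
    rw [hpart]
    exact card_iv _ _ _ (Nat.min_le_right _ _)
  have hcard_part_le : ∀ i, (part i).card ≤ k := by
    intro i
    have h1 := hcard_part i
    have h2 : min (κ + (i + 1) * k) n ≤ κ + (i + 1) * k := Nat.min_le_left _ _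
    have h3 : (i + 1) * k = i * k + k := by ring
    omega
  have hcard_full : ∀ i, i < p' → (part i).card = k := by
    intro i hi
    have h1 := hcard_part i
    have h2 : (i + 1) * k ≤ p' * k := Nat.mul_le_mul_right _ (by omega)
    have h3 : (i + 1) * k = i * k + k := by ring
    have h4 : p' * k = k * p' := Nat.mul_comm _ _
    have h5 : min (κ + (i + 1) * k) n = κ + (i + 1) * k := Nat.min_eq_left (by omega)
    omega
  have hcard_last : (part p').card = q' := by
    have h1 := hcard_part p'
    have h2 : (p' + 1) * k = p' * k + k := by ring
    have h4 : p' * k = k * p' := Nat.mul_comm _ _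
    have h5 : min (κ + (p' + 1) * k) n = n := Nat.min_eq_right (by omega)
    omega
  -- S and its complement
  set S : Finset (Fin n) := iv n 0 κ with hS
  have hcardS : S.card = κ := by rw [hS, card_iv n 0 κ (by omega)]; omega
  set Sc : Finset (Fin n) := iv n κ n with hSc
  have hcardSc : Sc.card = n - κ := by rw [hSc, card_iv n κ n le_rfl]
  have hmem_Sc : ∀ v : Fin n, v ∈ Sc ↔ κ ≤ v.val := by
    intro v
    rw [hSc, mem_iv]
    exact ⟨fun h => h.1, fun h => ⟨h, v.isLt⟩⟩
  have hpart_sub : ∀ i, part i ⊆ Sc := by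
    intro i v hv
    rw [hmem_Sc]
    exact by have := (hmem_part i v).mp hv; omega
  -- the capacity finset
  set P : Finset (Sym2 (Fin n)) :=
    (ndpairs (Finset.univ : Finset (Fin n)) \ ndpairs Sc) ∪
      (Finset.range (p' + 1)).biUnion (fun i => ndpairs (part i)) with hP
  have hdisjP : Disjoint (ndpairs (Finset.univ : Finset (Fin n)) \ ndpairs Sc)
      ((Finset.range (p' + 1)).biUnion (fun i => ndpairs (part i))) := by
    rw [Finset.disjoint_left]
    intro e he hb
    obtain ⟨i, _, hi⟩ := Finset.mem_biUnion.mp hb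
    exact (Finset.mem_sdiff.mp he).2 (ndpairs_mono (hpart_sub i) hi)
  have hdisj_parts : ∀ i ∈ Finset.range (p' + 1), ∀ j ∈ Finset.range (p' + 1), i ≠ j →
      Disjoint (ndpairs (part i)) (ndpairs (part j)) := by
    intro i _ j _ hij
    apply ndpairs_disjoint
    rw [Finset.disjoint_left]
    intro v hvi hvj
    exact hij ((hpartIdx i v hvi).2 ▸ (hpartIdx j v hvj).2)
  have hsum : ∑ i ∈ Finset.range (p' + 1), (ndpairs (part i)).card =
      p' * k.choose 2 + q'.choose 2 := by
    rw [Finset.sum_range_succ]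
    have h1 : ∑ i ∈ Finset.range p', (ndpairs (part i)).card =
        ∑ _i ∈ Finset.range p', k.choose 2 := by
      apply Finset.sum_congr rfl
      intro i hi
      rw [card_ndpairs, hcard_full i (Finset.mem_range.mp hi)]
    rw [h1, Finset.sum_const, Finset.card_range, smul_eq_mul, card_ndpairs, hcard_last]
  have hcardP : P.card = fmax n k κ := by
    rw [hP, Finset.card_union_of_disjoint hdisjP,
      Finset.card_sdiff_of_subset (ndpairs_mono (Finset.subset_univ Sc)),
      Finset.card_biUnion hdisj_parts, hsum, card_ndpairs, card_ndpairs,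
      Finset.card_univ, Fintype.card_fin, hcardSc]
    have hsplitn : n.choose 2 = κ.choose 2 + (n - κ).choose 2 + κ * (n - κ) := by
      have := chooseId κ (n - κ)
      rw [show κ + (n - κ) = n by omega] at this
      exact this
    unfold fmax
    rw [hdiv, hmod]
    omega
  -- pick the edges
  obtain ⟨E, hEP, hEcard⟩ := Finset.exists_subset_card_eq (show m ≤ P.card by omega)
  have hPnd : ∀ e ∈ P, ¬ e.IsDiag := by
    intro e he
    rcases Finset.mem_union.mp he with h | h
    · exact ndpairs_nondiag (Finset.mem_sdiff.mp h).1
    · obtain ⟨i, _, hi⟩ := Finset.mem_biUnion.mp h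
      exact ndpairs_nondiag hi
  have hGE : (SimpleGraph.fromEdgeSet (↑E : Set (Sym2 (Fin n)))).edgeSet = ↑E := by
    rw [SimpleGraph.edgeSet_fromEdgeSet]
    ext e
    constructor
    · rintro ⟨he, _⟩; exact he
    · intro he
      exact ⟨he, fun hd => hPnd e (hEP (Finset.mem_coe.mp he)) hd⟩
  refine ⟨SimpleGraph.fromEdgeSet ↑E, ?_, ↑S, ?_, ?_⟩
  · rw [hGE, Set.ncard_coe_finset, hEcard]
  · rw [Set.ncard_coe_finset, hcardS]
  · -- disconnection
    set G := SimpleGraph.fromEdgeSet (↑E : Set (Sym2 (Fin n))) with hG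
    have hmem_compl : ∀ v : Fin n, v ∈ ((↑S : Set (Fin n))ᶜ : Set (Fin n)) ↔ κ ≤ v.val := by
      intro v
      rw [Set.mem_compl_iff, Finset.mem_coe, hS, mem_iv]
      constructor
      · intro h; by_contra hc; exact h ⟨by omega, by omega⟩
      · intro h hc; omega
    set idx : Fin n → ℕ := fun v => (v.val - κ) / k with hidxdef
    have hadjIdx : ∀ a b : ((↑S : Set (Fin n))ᶜ : Set (Fin n)),
        (G.induce ((↑S : Set (Fin n))ᶜ)).Adj a b → idx ↑a = idx ↑b := by
      intro a b hab
      have hGadj : G.Adj ↑a ↑b := hab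
      have hmemE : s((↑a : Fin n), ↑b) ∈ E := by
        have : s((↑a : Fin n), ↑b) ∈ G.edgeSet := hGadj
        rw [hGE] at this
        exact Finset.mem_coe.mp this
      have hinP := hEP hmemE
      rcases Finset.mem_union.mp hinP with h | h
      · exfalso
        apply (Finset.mem_sdiff.mp h).2
        rw [mem_ndpairs]
        refine ⟨⟨(hmem_Sc _).mpr ((hmem_compl _).mp a.2),
          (hmem_Sc _).mpr ((hmem_compl _).mp b.2)⟩, hGadj.ne⟩
      · obtain ⟨i, _, hi⟩ := Finset.mem_biUnion.mp h
        rw [mem_ndpairs] at hi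
        rw [hidxdef]
        simp only
        rw [(hpartIdx i _ hi.1.1).2, (hpartIdx i _ hi.1.2).2]
    have hreach : ∀ a b : ((↑S : Set (Fin n))ᶜ : Set (Fin n)),
        (G.induce ((↑S : Set (Fin n))ᶜ)).Reachable a b → idx ↑a = idx ↑b := by
      intro a b hab
      obtain ⟨w⟩ := hab
      induction w with
      | nil => rfl
      | cons h _ ih => exact (hadjIdx _ _ h).trans ih
    intro w
    have hsupp : ((G.induce ((↑S : Set (Fin n))ᶜ)).connectedComponentMk w).supp ⊆
        Subtype.val ⁻¹' ↑(part (idx ↑w)) := by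
      intro u hu
      rw [ConnectedComponent.mem_supp_iff, ConnectedComponent.eq] at hu
      have hiu : idx ↑u = idx ↑w := hreach u w hu
      rw [Set.mem_preimage, Finset.mem_coe]
      have := hidx ↑u ((hmem_compl _).mp u.2)
      simp only [hidxdef]
      rw [← show ((↑u : Fin n).val - κ) / k = ((↑w : Fin n).val - κ) / k from hiu]
      exact this
    have hle : (((G.induce ((↑S : Set (Fin n))ᶜ)).connectedComponentMk w).supp).ncard ≤
        ((↑(part (idx ↑w)) : Set (Fin n))).ncard := by
      refine ncard_le_of_image_subset Subtype.val Subtype.val_injective ?_ (Set.toFinite _)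
      rw [Set.image_subset_iff]; exact hsupp
    rw [Set.ncard_coe_finset] at hle
    exact le_trans hle (hcard_part_le _)

private lemma lower_bound {n k : ℕ} (hk : 0 < k) (G : SimpleGraph (Fin n)) (S : Set (Fin n))
    (hS : vertexDisconnects G k S) : G.edgeSet.ncard ≤ fmax n k S.ncard := by
  classical
  have hcn : S.ncard ≤ n := by
    calc S.ncard ≤ (Set.univ : Set (Fin n)).ncard :=
          Set.ncard_le_ncard (Set.subset_univ S) (Set.toFinite _)
      _ = n := by rw [Set.ncard_univ, Nat.card_eq_fintype_card, Fintype.card_fin]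
  have hcompl : (Sᶜ : Set (Fin n)).ncard = n - S.ncard := by
    have h := Set.ncard_add_ncard_compl S
    rw [Nat.card_eq_fintype_card, Fintype.card_fin] at h
    omega
  have hcardc : Fintype.card (Sᶜ : Set (Fin n)) = n - S.ncard := by
    rw [← Nat.card_eq_fintype_card, Nat.card_coe_set_eq, hcompl]
  have hmax : (G.induce (Sᶜ : Set (Fin n))).edgeSet.ncard ≤ gcap k (n - S.ncard) :=
    maxEdges hk (n - S.ncard) _ inferInstance _ hcardc hS
  set ScF : Finset (Fin n) := (Sᶜ : Set (Fin n)).toFinset with hScF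
  have hScFcard : ScF.card = n - S.ncard := by
    rw [hScF, ← Set.ncard_eq_toFinset_card', hcompl]
  have hsub : G.edgeSet ⊆ ↑(ndpairs (Finset.univ : Finset (Fin n)) \ ndpairs ScF) ∪
      (Sym2.map (Subtype.val : (Sᶜ : Set (Fin n)) → Fin n) ''
        (G.induce (Sᶜ : Set (Fin n))).edgeSet) := by
    intro e he
    revert he
    refine e.ind (fun x y => fun he => ?_)
    have hadj : G.Adj x y := he
    by_cases hx : x ∈ (Sᶜ : Set (Fin n))
    · by_cases hy : y ∈ (Sᶜ : Set (Fin n))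
      · right
        exact ⟨s(⟨x, hx⟩, ⟨y, hy⟩), hadj, rfl⟩
      · left
        rw [Finset.mem_coe, Finset.mem_sdiff, mem_ndpairs]
        refine ⟨⟨⟨Finset.mem_univ _, Finset.mem_univ _⟩, hadj.ne⟩, fun hc => ?_⟩
        rw [mem_ndpairs] at hc
        exact hy (Set.mem_toFinset.mp hc.1.2)
    · left
      rw [Finset.mem_coe, Finset.mem_sdiff, mem_ndpairs]
      refine ⟨⟨⟨Finset.mem_univ _, Finset.mem_univ _⟩, hadj.ne⟩, fun hc => ?_⟩
      rw [mem_ndpairs] at hc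
      exact hx (Set.mem_toFinset.mp hc.1.1)
  have hcard1 : (↑(ndpairs (Finset.univ : Finset (Fin n)) \ ndpairs ScF) :
      Set (Sym2 (Fin n))).ncard = n.choose 2 - (n - S.ncard).choose 2 := by
    rw [Set.ncard_coe_finset, Finset.card_sdiff_of_subset (ndpairs_mono (Finset.subset_univ ScF)),
      card_ndpairs, card_ndpairs, Finset.card_univ, Fintype.card_fin, hScFcard]
  have hcard2 : (Sym2.map (Subtype.val : (Sᶜ : Set (Fin n)) → Fin n) ''
      (G.induce (Sᶜ : Set (Fin n))).edgeSet).ncard =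
      (G.induce (Sᶜ : Set (Fin n))).edgeSet.ncard :=
    Set.ncard_image_of_injective _ (Sym2.map.injective Subtype.val_injective)
  have htot : G.edgeSet.ncard ≤ (n.choose 2 - (n - S.ncard).choose 2) + gcap k (n - S.ncard) := by
    calc G.edgeSet.ncard ≤ _ := Set.ncard_le_ncard hsub (Set.toFinite _)
      _ ≤ _ := Set.ncard_union_le _ _
      _ ≤ _ := by rw [hcard1, hcard2]; exact Nat.add_le_add_left hmax _
  have hfm : fmax n k S.ncard =
      S.ncard * (n - S.ncard) + S.ncard.choose 2 + gcap k (n - S.ncard) := by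
    unfold fmax gcap; ring
  have hchoose : n.choose 2 = S.ncard.choose 2 + (n - S.ncard).choose 2 +
      S.ncard * (n - S.ncard) := by
    have := chooseId S.ncard (n - S.ncard)
    rw [show S.ncard + (n - S.ncard) = n by omega] at this
    exact this
  omega

private lemma fmax_step {n k c : ℕ} (hk : 0 < k) (hc : c + 1 ≤ n - k) :
    fmax n k c ≤ fmax n k (c + 1) := by
  have hn : k + c + 1 ≤ n := by omega
  obtain ⟨M, hM1, hM2⟩ : ∃ M, n - c = M + 1 ∧ k ≤ M := ⟨n - c - 1, by omega, by omega⟩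
  have hM3 : n - (c + 1) = M := by omega
  have hfc : fmax n k c = c * (M + 1) + c.choose 2 + gcap k (M + 1) := by
    unfold fmax gcap; rw [hM1]; ring
  have hfc1 : fmax n k (c + 1) = (c + 1) * M + (c + 1).choose 2 + gcap k M := by
    unfold fmax gcap; rw [hM3]; ring
  have hpred : gcap k (M + 1) ≤ gcap k M + (k - 1) := by
    have := gcap_pred hk (N := M + 1) (by omega)
    simpa using this
  have e1 : c * (M + 1) = c * M + c := by ring
  have e2 : (c + 1) * M = c * M + M := by ring
  have e3 : (c + 1).choose 2 = c + c.choose 2 := by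
    rw [Nat.choose_succ_succ, Nat.choose_one_right]
  omega

private lemma fmax_mono {n k : ℕ} (hk : 0 < k) :
    ∀ d, d ≤ n - k → ∀ c, c ≤ d → fmax n k c ≤ fmax n k d := by
  intro d
  induction d with
  | zero => intro _ c hc; rw [Nat.le_zero.mp hc]
  | succ d ih =>
    intro hd c hc
    rcases Nat.eq_or_lt_of_le hc with h | h
    · rw [h]
    · exact le_trans (ih (by omega) c (by omega)) (fmax_step hk (by omega))

private lemma COv_spec {n k : ℕ} (G : SimpleGraph (Fin n)) :
    ∃ S : Set (Fin n), S.ncard = COv G k ∧ vertexDisconnects G k S := by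
  have hne : {c | ∃ S : Set (Fin n), S.ncard = c ∧ vertexDisconnects G k S}.Nonempty := by
    refine ⟨(Set.univ : Set (Fin n)).ncard, Set.univ, rfl, ?_⟩
    intro v
    exact absurd v.2 (by simp)
  obtain ⟨S, h1, h2⟩ := Nat.sInf_mem hne
  exact ⟨S, h1, h2⟩
theorem gminV_characterization (n p q : ℕ) (r : ℝ) (hr0 : 0 < r) (hr1 : r < 1)
    (k : ℕ) (hk : k = ⌊r * n⌋₊) (hk1 : 1 ≤ k) (hn : n = p * k + q) (hq : q < k)
    (m : ℕ) (hm : m ≤ n.choose 2) :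
    (m ≤ fmax n k 0 → gminV n k m = 0) ∧
      ∀ κ, 1 ≤ κ → κ ≤ n - k → fmax n k (κ - 1) < m → m ≤ fmax n k κ →
        gminV n k m = κ := by
  have hn0 : 0 < n := by
    by_contra h
    have hn : n = 0 := by omega
    subst hn
    rw [Nat.cast_zero, mul_zero, Nat.floor_zero] at hk
    omega
  have hkn : k < n := by
    have h1 : (k : ℝ) ≤ r * n := by
      rw [hk]
      exact Nat.floor_le (by positivity)
    have h2 : r * n < n := by
      have : (0 : ℝ) < n := by exact_mod_cast hn0
      nlinarith
    exact_mod_cast lt_of_le_of_lt h1 h2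
  have hk0 : 0 < k := hk1
  constructor
  · intro hm0
    obtain ⟨G, hGm, S, hS0, hSd⟩ := constr n k 0 m hk0 (by omega) hm0
    have hCO : COv G k = 0 := Nat.le_zero.mp (Nat.sInf_le ⟨S, hS0, hSd⟩)
    exact Nat.le_zero.mp (Nat.sInf_le ⟨G, hGm, hCO⟩)
  · intro κ hκ1 hκnk hlow hhigh
    obtain ⟨G₀, hG₀m, S₀, hS₀, hd₀⟩ := constr n k κ m hk0 (by omega) hhigh
    have hLB : ∀ G : SimpleGraph (Fin n), G.edgeSet.ncard = m → κ ≤ COv G k := by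
      intro G hGm
      by_contra hnlt
      push_neg at hnlt
      obtain ⟨S, hSc, hSd⟩ := COv_spec (k := k) G
      have hbound := lower_bound hk0 G S hSd
      rw [hSc] at hbound
      have hmono : fmax n k (COv G k) ≤ fmax n k (κ - 1) :=
        fmax_mono hk0 (κ - 1) (by omega) (COv G k) (by omega)
      omega
    have hCO₀ : COv G₀ k = κ :=
      le_antisymm (Nat.sInf_le ⟨S₀, hS₀, hd₀⟩) (hLB G₀ hG₀m)
    have hκmem : κ ∈ {c | ∃ G : SimpleGraph (Fin n), G.edgeSet.ncard = m ∧ COv G k = c} :=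
      ⟨G₀, hG₀m, hCO₀⟩
    refine le_antisymm (Nat.sInf_le hκmem) ?_
    show κ ≤ sInf {c | ∃ G : SimpleGraph (Fin n), G.edgeSet.ncard = m ∧ COv G k = c}
    obtain ⟨G, hGm, hGc⟩ := Nat.sInf_mem (⟨κ, hκmem⟩ : Set.Nonempty _)
    have hle : κ ≤ COv G k := hLB G hGm
    rw [hGc] at hle
    exact hle
end

section
/- Fix $n$ and $0 < r < 1$ with $k = \lfloor rn \rfloor \geq 1$. If $\binom{n}{2} - k < m \leq \binom{n}{2}$, then $\max_{G \in G(n,m)} CO_v^r(G) = n - k$. -/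
open SimpleGraph

/-- Any graph on `Fin n` admits a disconnecting set of size `n - k`. -/
lemma exists_disconnect_aux (n k : ℕ) (hkn : k ≤ n) (G : SimpleGraph (Fin n)) :
    ∃ S : Set (Fin n), S.ncard = n - k ∧ vertexDisconnects G k S := by
  obtain ⟨S, -, hScard⟩ := Set.exists_subset_card_eq (s := (Set.univ : Set (Fin n)))
    (n := n - k) (by simp [Set.ncard_univ])
  refine ⟨S, hScard, fun v => ?_⟩
  have h1 : ((G.induce Sᶜ).connectedComponentMk v).supp.ncard ≤ (Set.univ : Set ↥Sᶜ).ncard :=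
    Set.ncard_le_ncard (Set.subset_univ _) Set.finite_univ
  have h2 : (Set.univ : Set ↥Sᶜ).ncard = Sᶜ.ncard := by
    rw [Set.ncard_univ, Nat.card_coe_set_eq]
  have h3 := Set.ncard_add_ncard_compl S
  simp [Nat.card_eq_fintype_card] at h3
  omega

/-- In a dense graph (fewer than `k` missing edges), every disconnecting set
has at least `n - k` vertices. -/
lemma lower_aux (n k : ℕ) (G : SimpleGraph (Fin n))
    (hM : ((⊤ : SimpleGraph (Fin n)).edgeSet \ G.edgeSet).ncard < k)
    (S : Set (Fin n)) (hS : vertexDisconnects G k S) :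
    n - k ≤ S.ncard := by
  classical
  replace hS : ∀ v : ↥Sᶜ, ((G.induce Sᶜ).connectedComponentMk v).supp.ncard ≤ k := hS
  by_contra hlt
  push_neg at hlt
  set T := Sᶜ with hT
  have hsum := Set.ncard_add_ncard_compl S
  simp [Nat.card_eq_fintype_card] at hsum
  have hTcard : k + 1 ≤ T.ncard := by rw [hT]; omega
  have hTuniv : (Set.univ : Set ↥T).ncard = T.ncard := by
    rw [Set.ncard_univ, Nat.card_coe_set_eq]
  obtain ⟨a0, ha0⟩ := (Set.ncard_pos (Set.toFinite T)).mp (by omega)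
  set H := G.induce T with hH
  set a₀ : ↥T := ⟨a0, ha0⟩ with ha₀
  have hb : ∃ b₀ : ↥T, H.connectedComponentMk b₀ ≠ H.connectedComponentMk a₀ := by
    by_contra hall
    push_neg at hall
    have hu : (H.connectedComponentMk a₀).supp = Set.univ := by
      ext b; simp [ConnectedComponent.mem_supp_iff, hall b]
    have h1 := hS a₀
    rw [hu, hTuniv] at h1
    omega
  obtain ⟨b₀, hb₀⟩ := hb
  have hadj : ∀ u v : ↥T, H.connectedComponentMk u ≠ H.connectedComponentMk v →
      ¬ G.Adj u v ∧ (u : Fin n) ≠ (v : Fin n) := by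
    intro u v huv
    constructor
    · intro hA
      exact huv (ConnectedComponent.eq.mpr (Adj.reachable (by exact hA)))
    · intro hE
      exact huv (by rw [Subtype.ext hE])
  set f : ↥T → Sym2 (Fin n) := fun v =>
    if H.connectedComponentMk v = H.connectedComponentMk a₀ then s((v : Fin n), (b₀ : Fin n))
    else s((a₀ : Fin n), (v : Fin n)) with hf
  set D : Set ↥T := {v | v ≠ b₀} with hD
  set M : Set (Sym2 (Fin n)) := (⊤ : SimpleGraph (Fin n)).edgeSet \ G.edgeSet with hMdef
  have hmaps : ∀ v ∈ D, f v ∈ M := by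
    intro v hv
    simp only [hf]
    split_ifs with hc
    · have := hadj v b₀ (by rw [hc]; exact fun h => hb₀ h.symm)
      constructor
      · rw [edgeSet_top]; simpa using this.2
      · rw [mem_edgeSet]; exact this.1
    · have := hadj a₀ v (fun h => hc h.symm)
      constructor
      · rw [edgeSet_top]; simpa using this.2
      · rw [mem_edgeSet]; exact this.1
  have hinj : Set.InjOn f D := by
    intro u hu v hv huv
    simp only [hf] at huv
    split_ifs at huv with h1 h2 h2
    · rcases Sym2.eq_iff.mp huv with ⟨h, -⟩ | ⟨-, h⟩
      · exact Subtype.ext h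
      · exact absurd (Subtype.ext h.symm) hv
    · rcases Sym2.eq_iff.mp huv with ⟨h3, h4⟩ | ⟨h3, h4⟩
      · exact absurd (Subtype.ext h4.symm) hv
      · exact absurd (congrArg H.connectedComponentMk (Subtype.ext h4)) hb₀
    · rcases Sym2.eq_iff.mp huv with ⟨h3, h4⟩ | ⟨h3, h4⟩
      · exact absurd (Subtype.ext h4) hu
      · exact absurd (congrArg H.connectedComponentMk (Subtype.ext h3.symm)) hb₀
    · rcases Sym2.eq_iff.mp huv with ⟨-, h⟩ | ⟨h3, h4⟩
      · exact Subtype.ext h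
      · exact Subtype.ext (h4.trans h3)
  have hDcard : k ≤ D.ncard := by
    have he : D = {b₀}ᶜ := by ext v; simp [hD]
    have h1 := Set.ncard_add_ncard_compl ({b₀} : Set ↥T)
    rw [Set.ncard_singleton, Nat.card_coe_set_eq] at h1
    rw [he]
    omega
  have hle : D.ncard ≤ M.ncard := by
    rw [← Set.ncard_image_of_injOn hinj]
    exact Set.ncard_le_ncard (Set.image_subset_iff.mpr hmaps) (Set.toFinite M)
  omega

theorem gmaxV_dense (n : ℕ) (r : ℝ) (hr0 : 0 < r) (hr1 : r < 1)
    (k : ℕ) (hk : k = ⌊r * n⌋₊) (hk1 : 1 ≤ k)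
    (m : ℕ) (hm1 : n.choose 2 - k < m) (hm2 : m ≤ n.choose 2) :
    IsGreatest {c | ∃ G : SimpleGraph (Fin n), G.edgeSet.ncard = m ∧ COv G k = c}
      (n - k) := by
  classical
  have hkn : k ≤ n := by
    rw [hk]
    exact Nat.floor_le_of_le (by nlinarith [Nat.cast_nonneg (α := ℝ) n])
  have htop : ((⊤ : SimpleGraph (Fin n)).edgeSet).ncard = n.choose 2 := by
    rw [Set.ncard_eq_toFinset_card']
    have h := SimpleGraph.card_edgeFinset_top_eq_card_choose_two (V := Fin n)
    simpa [edgeFinset, Fintype.card_fin] using h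
  constructor
  · -- membership: the dense graph with m edges attains n - k
    obtain ⟨E, hEsub, hEcard⟩ := Set.exists_subset_card_eq
      (s := (⊤ : SimpleGraph (Fin n)).edgeSet) (n := m) (by rw [htop]; exact hm2)
    set G := fromEdgeSet E with hG
    have hGE : G.edgeSet = E := by
      rw [hG, edgeSet_fromEdgeSet]
      ext e
      simp only [Set.mem_diff, Set.mem_setOf_eq]
      refine ⟨fun h => h.1, fun h => ⟨h, ?_⟩⟩
      have := hEsub h
      rw [edgeSet_top] at this
      exact this
    have hMlt : ((⊤ : SimpleGraph (Fin n)).edgeSet \ G.edgeSet).ncard < k := by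
      rw [hGE, Set.ncard_diff hEsub (Set.toFinite _), htop, hEcard]
      omega
    refine ⟨G, by rw [hGE]; exact hEcard, ?_⟩
    obtain ⟨S0, hS0card, hS0d⟩ := exists_disconnect_aux n k hkn G
    have hmem : (n - k) ∈ {c | ∃ S : Set (Fin n), S.ncard = c ∧ vertexDisconnects G k S} :=
      ⟨S0, hS0card, hS0d⟩
    unfold COv
    apply le_antisymm
    · exact Nat.sInf_le hmem
    · refine le_csInf ⟨n - k, hmem⟩ ?_
      rintro c ⟨S, rfl, hSd⟩
      exact lower_aux n k G hMlt S hSd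
  · -- upper bound
    rintro c ⟨G, -, rfl⟩
    obtain ⟨S0, hS0card, hS0d⟩ := exists_disconnect_aux n k hkn G
    exact Nat.sInf_le ⟨S0, hS0card, hS0d⟩
end
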